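/- arXiv:1204.6695 — 2 statements merged into one kernel-verified Lean document; each statement's English description precedes it below -/
import Mathlib

section
/- Let L ⇝ R be a rewrite pattern. Then applying any of the rewrite !-box operations PCOPY_b, PDROP_b, PKILL_b (for a !-vertex b of I), or PMERGE_{b,b'} (for !-vertices b, b' of I such that (b,b'), (i₁(b),i₁(b')) and (i₂(b),i₂(b')) are each mergable) yields another rewrite pattern. -/
/-- Vertex types: node-vertices, wire-vertices and `!`-vertices. -/
inductive VTy : Type
  | node | wire | bang
  deriving DecidableEq

/-- A directed graph whose vertices are typed by `VTy`. -/
structure TGraph (V E : Type) where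
  s : E → V
  t : E → V
  ty : V → VTy

namespace TGraph

variable {V E : Type}

/-- No edge has both a node-vertex source and a node-vertex target. -/
def NoNodeNode (G : TGraph V E) : Prop :=
  ∀ e, ¬ (G.ty (G.s e) = .node ∧ G.ty (G.t e) = .node)

/-- A `G₂`-typed graph: only node- and wire-vertices, no node-node edges. -/
def IsG2 (G : TGraph V E) : Prop :=
  G.NoNodeNode ∧ ∀ v, G.ty v ≠ .bang

/-- A `G₃`-typed graph: no node-node edges, and every edge into a `!`-vertex
comes from a `!`-vertex. -/
def IsG3 (G : TGraph V E) : Prop :=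
  G.NoNodeNode ∧ ∀ e, G.ty (G.t e) = .bang → G.ty (G.s e) = .bang

/-- An input: a wire-vertex all of whose in-edges have `!`-vertex sources.
In a `G₂`-typed graph this says exactly: a wire-vertex with no in-edges. -/
def IsInput (G : TGraph V E) (v : V) : Prop :=
  G.ty v = .wire ∧ ∀ e, G.t e = v → G.ty (G.s e) = .bang

/-- An output: a wire-vertex with no out-edges. -/
def IsOutput (G : TGraph V E) (v : V) : Prop :=
  G.ty v = .wire ∧ ∀ e, G.s e ≠ v

/-- A string graph: a `G₂`-typed graph where every wire-vertex has at most one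
in-edge and at most one out-edge. -/
def IsStringGraph (G : TGraph V E) : Prop :=
  G.IsG2 ∧ ∀ v, G.ty v = .wire →
    (∀ e₁ e₂, G.t e₁ = v → G.t e₂ = v → e₁ = e₂) ∧
    (∀ e₁ e₂, G.s e₁ = v → G.s e₂ = v → e₁ = e₂)

/-- The set of successors of a vertex. -/
def bsucc (G : TGraph V E) (b : V) : Set V := {v | ∃ e, G.s e = b ∧ G.t e = v}

/-- The set of predecessors of a vertex. -/
def bpred (G : TGraph V E) (b : V) : Set V := {v | ∃ e, G.s e = v ∧ G.t e = b}

/-- The full subgraph on a set of vertices, as a standalone graph. -/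
def restrict (G : TGraph V E) (S : Set V) :
    TGraph {v : V // v ∈ S} {e : E // G.s e ∈ S ∧ G.t e ∈ S} where
  s e := ⟨G.s e.1, e.2.1⟩
  t e := ⟨G.t e.1, e.2.2⟩
  ty v := G.ty v.1

/-- A subgraph of a graph. -/
structure Sub (G : TGraph V E) where
  verts : Set V
  edges : Set E
  s_mem : ∀ e ∈ edges, G.s e ∈ verts
  t_mem : ∀ e ∈ edges, G.t e ∈ verts

namespace Sub

variable {G : TGraph V E}

/-- The whole graph as a subgraph of itself. -/
def top (G : TGraph V E) : Sub G :=
  ⟨Set.univ, Set.univ, fun _ _ => trivial, fun _ _ => trivial⟩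

def inter (A B : Sub G) : Sub G :=
  ⟨A.verts ∩ B.verts, A.edges ∩ B.edges,
    fun e he => ⟨A.s_mem e he.1, B.s_mem e he.2⟩,
    fun e he => ⟨A.t_mem e he.1, B.t_mem e he.2⟩⟩

def union (A B : Sub G) : Sub G :=
  ⟨A.verts ∪ B.verts, A.edges ∪ B.edges,
    fun e he => he.elim (fun h => Or.inl (A.s_mem e h)) (fun h => Or.inr (B.s_mem e h)),
    fun e he => he.elim (fun h => Or.inl (A.t_mem e h)) (fun h => Or.inr (B.t_mem e h))⟩

/-- `H∖A` : the largest subgraph of `H` that is disjoint from `A`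
(the full subgraph of `H` on the vertices of `H` not in `A`). -/
def minus (H A : Sub G) : Sub G :=
  ⟨H.verts \ A.verts, {e | e ∈ H.edges ∧ G.s e ∉ A.verts ∧ G.t e ∉ A.verts},
    fun e he => ⟨H.s_mem e he.1, he.2.1⟩,
    fun e he => ⟨H.t_mem e he.1, he.2.2⟩⟩

/-- An input of a subgraph: a wire-vertex of the subgraph all of whose in-edges
(inside the subgraph) have `!`-vertex sources. -/
def IsInput (A : Sub G) (v : V) : Prop :=
  v ∈ A.verts ∧ G.ty v = .wire ∧ ∀ e ∈ A.edges, G.t e = v → G.ty (G.s e) = .bang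

/-- An output of a subgraph: a wire-vertex of the subgraph with no out-edges
inside the subgraph. -/
def IsOutput (A : Sub G) (v : V) : Prop :=
  v ∈ A.verts ∧ G.ty v = .wire ∧ ∀ e ∈ A.edges, G.s e ≠ v

/-- `A` is open in `H`: `In(H∖A) ⊆ In(H)` and `Out(H∖A) ⊆ Out(H)`. -/
def IsOpenIn (A H : Sub G) : Prop :=
  (∀ v, (H.minus A).IsInput v → H.IsInput v) ∧
  (∀ v, (H.minus A).IsOutput v → H.IsOutput v)

/-- `A` is an open subgraph of `G`. -/
def IsOpen (A : Sub G) : Prop := A.IsOpenIn (top G)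

end Sub

/-- The full subgraph on a vertex set, as a subgraph. -/
def fullSub (G : TGraph V E) (S : Set V) : Sub G :=
  ⟨S, {e | G.s e ∈ S ∧ G.t e ∈ S}, fun _ he => he.1, fun _ he => he.2⟩

/-- `B(b)` : the `!`-box of `b`, i.e. the full subgraph on the successors of `b`. -/
def bbox (G : TGraph V E) (b : V) : Sub G := G.fullSub (G.bsucc b)

/-- Edges of `Σ(G)`, the full subgraph on node- and wire-vertices. -/
def sigmaEdges (G : TGraph V E) : Set E :=
  {e | G.ty (G.s e) ≠ .bang ∧ G.ty (G.t e) ≠ .bang}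

/-- Edges of `β(G)`, the full subgraph on `!`-vertices. -/
def betaEdges (G : TGraph V E) : Set E :=
  {e | G.ty (G.s e) = .bang ∧ G.ty (G.t e) = .bang}

/-- `Σ(G)` is a string graph. -/
def SigmaIsStringGraph (G : TGraph V E) : Prop :=
  G.NoNodeNode ∧ ∀ v, G.ty v = .wire →
    (∀ e₁ e₂, e₁ ∈ G.sigmaEdges → e₂ ∈ G.sigmaEdges → G.t e₁ = v → G.t e₂ = v → e₁ = e₂) ∧
    (∀ e₁ e₂, e₁ ∈ G.sigmaEdges → e₂ ∈ G.sigmaEdges → G.s e₁ = v → G.s e₂ = v → e₁ = e₂)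

/-- `β(G)` is posetal: simple and, as a relation on `!`-vertices, a partial order. -/
def BetaPosetal (G : TGraph V E) : Prop :=
  (∀ e₁ e₂, e₁ ∈ G.betaEdges → e₂ ∈ G.betaEdges →
    G.s e₁ = G.s e₂ → G.t e₁ = G.t e₂ → e₁ = e₂) ∧
  (∀ b, G.ty b = .bang → b ∈ G.bsucc b) ∧
  (∀ b b', G.ty b = .bang → G.ty b' = .bang →
    b' ∈ G.bsucc b → b ∈ G.bsucc b' → b = b') ∧
  (∀ a b c, G.ty a = .bang → G.ty b = .bang → G.ty c = .bang →
    b ∈ G.bsucc a → c ∈ G.bsucc b → c ∈ G.bsucc a)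

/-- A pattern graph. -/
def IsPattern (G : TGraph V E) : Prop :=
  G.IsG3 ∧ G.SigmaIsStringGraph ∧ G.BetaPosetal ∧
  (∀ b, G.ty b = .bang → (G.bbox b).IsOpen) ∧
  (∀ b b', G.ty b = .bang → G.ty b' = .bang → b' ∈ G.bsucc b →
    G.bsucc b' ⊆ G.bsucc b)

end TGraph

namespace TGraph

variable {V E V' E' V'' E'' : Type}

/-- A morphism of typed graphs. -/
structure GHom (G : TGraph V E) (H : TGraph V' E') where
  fv : V → V'
  fe : E → E'
  map_s : ∀ e, H.s (fe e) = fv (G.s e)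
  map_t : ∀ e, H.t (fe e) = fv (G.t e)
  map_ty : ∀ v, H.ty (fv v) = G.ty v

namespace GHom

variable {G : TGraph V E} {H : TGraph V' E'} {K : TGraph V'' E''}

protected def id (G : TGraph V E) : GHom G G :=
  ⟨fun v => v, fun e => e, fun _ => rfl, fun _ => rfl, fun _ => rfl⟩

def comp (g : GHom H K) (f : GHom G H) : GHom G K where
  fv v := g.fv (f.fv v)
  fe e := g.fe (f.fe e)
  map_s e := by rw [g.map_s, f.map_s]
  map_t e := by rw [g.map_t, f.map_t]
  map_ty v := by rw [g.map_ty, f.map_ty]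

theorem mem_bsucc (f : GHom G H) {b v : V} (h : v ∈ G.bsucc b) :
    f.fv v ∈ H.bsucc (f.fv b) := by
  obtain ⟨e, hs, ht⟩ := h
  exact ⟨f.fe e, by rw [f.map_s, hs], by rw [f.map_t, ht]⟩

theorem mem_bpred (f : GHom G H) {b v : V} (h : v ∈ G.bpred b) :
    f.fv v ∈ H.bpred (f.fv b) := by
  obtain ⟨e, hs, ht⟩ := h
  exact ⟨f.fe e, by rw [f.map_s, hs], by rw [f.map_t, ht]⟩

end GHom

/-- An isomorphism of typed graphs. -/
structure GIso (G : TGraph V E) (H : TGraph V' E') where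
  toHom : GHom G H
  fv_bij : Function.Bijective toHom.fv
  fe_bij : Function.Bijective toHom.fe

end TGraph

namespace TGraph

variable {V E : Type}

open Classical in
/-- The canonical map into the vertex set of `COPY_b(G)`: vertices of `B(b)`
go to the second copy, all other vertices to the (shared) first copy. -/
noncomputable def embed (G : TGraph V E) (b v : V) : V ⊕ {w : V // w ∈ G.bsucc b} :=
  if h : v ∈ G.bsucc b then Sum.inr ⟨v, h⟩ else Sum.inl v

theorem embed_of_mem (G : TGraph V E) {b v : V} (h : v ∈ G.bsucc b) :
    G.embed b v = Sum.inr ⟨v, h⟩ := by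
  simp [embed, h]

theorem embed_of_not_mem (G : TGraph V E) {b v : V} (h : v ∉ G.bsucc b) :
    G.embed b v = Sum.inl v := by
  simp [embed, h]

/-- `COPY_b(G)` : the pushout of the inclusion `G∖B(b) ↪ G` along itself,
computed concretely: two copies of `G` glued along `G∖B(b)`. -/
noncomputable def copyGraph (G : TGraph V E) (b : V) :
    TGraph (V ⊕ {w : V // w ∈ G.bsucc b})
      (E ⊕ {e : E // G.s e ∈ G.bsucc b ∨ G.t e ∈ G.bsucc b}) where
  s := Sum.elim (fun e => Sum.inl (G.s e)) (fun e => G.embed b (G.s e.1))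
  t := Sum.elim (fun e => Sum.inl (G.t e)) (fun e => G.embed b (G.t e.1))
  ty := Sum.elim G.ty fun v => G.ty v.1

/-- `DROP_b(G) = G∖{b}`. -/
def dropGraph (G : TGraph V E) (b : V) :=
  G.restrict {v : V | v ≠ b}

/-- `KILL_b(G) = G∖B(b)`. -/
def killGraph (G : TGraph V E) (b : V) :=
  G.restrict {v : V | v ∉ G.bsucc b}

end TGraph

namespace TGraph

variable {V E : Type}

/-- The vertex identification performed by `MERGE_{b,b'}`: `b` and `b'` are
identified. -/
def mergeVRel (b b' : V) (v₁ v₂ : V) : Prop :=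
  v₁ = v₂ ∨ (v₁ = b ∧ v₂ = b') ∨ (v₁ = b' ∧ v₂ = b)

/-- The edges of `B↑(b)`, the full subgraph on the predecessors of `b`. -/
def upEdges (G : TGraph V E) (b : V) : Set E :=
  {e | G.s e ∈ G.bpred b ∧ G.t e ∈ G.bpred b}

/-- The edge identification performed by `MERGE_{b,b'}`: an edge of `B↑(b)` is
identified with the corresponding edge of `B↑(b')`. -/
def mergeERel (G : TGraph V E) (b b' : V) (e₁ e₂ : E) : Prop :=
  e₁ = e₂ ∨
    (e₁ ∈ G.upEdges b ∧ e₂ ∈ G.upEdges b' ∧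
      Quot.mk (mergeVRel b b') (G.s e₁) = Quot.mk (mergeVRel b b') (G.s e₂) ∧
      Quot.mk (mergeVRel b b') (G.t e₁) = Quot.mk (mergeVRel b b') (G.t e₂)) ∨
    (e₁ ∈ G.upEdges b' ∧ e₂ ∈ G.upEdges b ∧
      Quot.mk (mergeVRel b b') (G.s e₁) = Quot.mk (mergeVRel b b') (G.s e₂) ∧
      Quot.mk (mergeVRel b b') (G.t e₁) = Quot.mk (mergeVRel b b') (G.t e₂))

open Classical in
/-- `MERGE_{b,b'}(G)` : the coequaliser of the inclusion `B↑(b) ↪ G` and the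
composite of the canonical isomorphism `B↑(b) ≅ B↑(b')` with `B↑(b') ↪ G`,
computed concretely as a quotient of `G`. -/
noncomputable def mergeGraph (G : TGraph V E) (b b' : V) :
    TGraph (Quot (mergeVRel b b')) (Quot (G.mergeERel b b')) where
  s := Quot.lift (fun e => Quot.mk _ (G.s e)) (by
    intro e₁ e₂ h
    rcases h with h | h | h
    · rw [h]
    · exact h.2.2.1
    · exact h.2.2.1)
  t := Quot.lift (fun e => Quot.mk _ (G.t e)) (by
    intro e₁ e₂ h
    rcases h with h | h | h
    · rw [h]
    · exact h.2.2.2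
    · exact h.2.2.2)
  ty := Quot.lift (fun v => if v = b' then G.ty b else G.ty v) (by
    intro v₁ v₂ h
    rcases h with h | ⟨h1, h2⟩ | ⟨h1, h2⟩
    · rw [h]
    · subst h1; subst h2; simp
    · subst h1; subst h2; simp)

open Classical in
theorem mergeGraph_ty_mk (G : TGraph V E) (b b' v : V) :
    (G.mergeGraph b b').ty (Quot.mk _ v) = if v = b' then G.ty b else G.ty v := rfl

end TGraph

namespace TGraph

variable {VL EL VI EI VR ER : Type}

theorem mem_of_preimage_eq {α β : Type _} (f : α → β) {S : Set β} {T : Set α}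
    (h : f ⁻¹' S = T) {x : α} (hx : f x ∈ S) : x ∈ T := by
  rw [← h]; exact hx

/-- A rewrite pattern: a span of pattern-graph morphisms `L ← I → R` such that
`Σ(I)` is a point graph, `L` and `R` share the same boundary via `i₁`, `i₂`,
`β(i₁)` and `β(i₂)` are isomorphisms onto `β(L)`, `β(R)`, and `!`-boxes are
reflected exactly. -/
structure IsRewritePattern (L : TGraph VL EL) (I : TGraph VI EI) (R : TGraph VR ER)
    (i₁ : GHom I L) (i₂ : GHom I R) : Prop where
  patL : L.IsPattern
  patI : I.IsPattern
  patR : R.IsPattern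
  /-- `Σ(I)` is a point graph: no node-vertices ... -/
  no_node : ∀ v, I.ty v ≠ .node
  /-- ... and no edges between non-`!`-vertices. -/
  no_sigma_edges : ∀ e : EI, e ∉ I.sigmaEdges
  /-- `i₁` restricts to a bijection from the wire-vertices of `I` onto the
  boundary of `L`. -/
  bound_bij₁ : Set.BijOn i₁.fv {v | I.ty v = .wire} {v | L.IsInput v ∨ L.IsOutput v}
  bound_bij₂ : Set.BijOn i₂.fv {v | I.ty v = .wire} {v | R.IsInput v ∨ R.IsOutput v}
  /-- inputs correspond to inputs and outputs to outputs. -/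
  inout : ∀ v, I.ty v = .wire →
    ((L.IsInput (i₁.fv v) ↔ R.IsInput (i₂.fv v)) ∧
     (L.IsOutput (i₁.fv v) ↔ R.IsOutput (i₂.fv v)))
  beta_bijV₁ : Set.BijOn i₁.fv {v | I.ty v = .bang} {v | L.ty v = .bang}
  beta_bijE₁ : Set.BijOn i₁.fe I.betaEdges L.betaEdges
  beta_bijV₂ : Set.BijOn i₂.fv {v | I.ty v = .bang} {v | R.ty v = .bang}
  beta_bijE₂ : Set.BijOn i₂.fe I.betaEdges R.betaEdges
  /-- the preimage of `B(i₁(b))` under `i₁` is exactly `B(b)`. -/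
  box₁ : ∀ b, I.ty b = .bang → i₁.fv ⁻¹' (L.bsucc (i₁.fv b)) = I.bsucc b
  box₂ : ∀ b, I.ty b = .bang → i₂.fv ⁻¹' (R.bsucc (i₂.fv b)) = I.bsucc b

namespace IsRewritePattern

variable {L : TGraph VL EL} {I : TGraph VI EI} {R : TGraph VR ER}
  {i₁ : GHom I L} {i₂ : GHom I R}

theorem inj₁ (h : IsRewritePattern L I R i₁ i₂) {b : VI}
    (hb : I.ty b = .bang) : ∀ v, i₁.fv v = i₁.fv b → v = b := by
  intro v hv
  have htv : I.ty v = .bang := by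
    rw [← i₁.map_ty v, hv, i₁.map_ty, hb]
  exact h.beta_bijV₁.injOn htv hb hv

theorem inj₂ (h : IsRewritePattern L I R i₁ i₂) {b : VI}
    (hb : I.ty b = .bang) : ∀ v, i₂.fv v = i₂.fv b → v = b := by
  intro v hv
  have htv : I.ty v = .bang := by
    rw [← i₂.map_ty v, hv, i₂.map_ty, hb]
  exact h.beta_bijV₂.injOn htv hb hv

theorem ne₁ (h : IsRewritePattern L I R i₁ i₂) {b : VI}
    (hb : I.ty b = .bang) : ∀ v, v ≠ b → i₁.fv v ≠ i₁.fv b :=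
  fun v hv hc => hv (h.inj₁ hb v hc)

theorem ne₂ (h : IsRewritePattern L I R i₁ i₂) {b : VI}
    (hb : I.ty b = .bang) : ∀ v, v ≠ b → i₂.fv v ≠ i₂.fv b :=
  fun v hv hc => hv (h.inj₂ hb v hc)

end IsRewritePattern

/-- The morphism `COPY_b(I) → COPY_{f(b)}(L)` induced between the pushouts by
a morphism `f : I → L` reflecting the `!`-box of `b` exactly. -/
noncomputable def copyHom {I : TGraph VI EI} {L : TGraph VL EL}
    (f : GHom I L) (b : VI)
    (hbox : f.fv ⁻¹' (L.bsucc (f.fv b)) = I.bsucc b) :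
    GHom (I.copyGraph b) (L.copyGraph (f.fv b)) where
  fv := Sum.elim (fun v => Sum.inl (f.fv v))
    (fun v => Sum.inr ⟨f.fv v.1, f.mem_bsucc v.2⟩)
  fe := Sum.elim (fun e => Sum.inl (f.fe e))
    (fun e => Sum.inr ⟨f.fe e.1, by
      rcases e.2 with h | h
      · exact Or.inl (by rw [f.map_s]; exact f.mem_bsucc h)
      · exact Or.inr (by rw [f.map_t]; exact f.mem_bsucc h)⟩)
  map_s := by
    rintro (e | e)
    · show Sum.inl (L.s (f.fe e)) = Sum.inl (f.fv (I.s e))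
      rw [f.map_s]
    · show L.embed (f.fv b) (L.s (f.fe e.1)) =
        Sum.elim (fun v => Sum.inl (f.fv v))
          (fun v => Sum.inr ⟨f.fv v.1, f.mem_bsucc v.2⟩) (I.embed b (I.s e.1))
      rw [f.map_s]
      by_cases h : I.s e.1 ∈ I.bsucc b
      · rw [I.embed_of_mem h, L.embed_of_mem (f.mem_bsucc h)]
        rfl
      · have h' : f.fv (I.s e.1) ∉ L.bsucc (f.fv b) :=
          fun hc => h (mem_of_preimage_eq f.fv hbox hc)
        rw [I.embed_of_not_mem h, L.embed_of_not_mem h']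
        rfl
  map_t := by
    rintro (e | e)
    · show Sum.inl (L.t (f.fe e)) = Sum.inl (f.fv (I.t e))
      rw [f.map_t]
    · show L.embed (f.fv b) (L.t (f.fe e.1)) =
        Sum.elim (fun v => Sum.inl (f.fv v))
          (fun v => Sum.inr ⟨f.fv v.1, f.mem_bsucc v.2⟩) (I.embed b (I.t e.1))
      rw [f.map_t]
      by_cases h : I.t e.1 ∈ I.bsucc b
      · rw [I.embed_of_mem h, L.embed_of_mem (f.mem_bsucc h)]
        rfl
      · have h' : f.fv (I.t e.1) ∉ L.bsucc (f.fv b) :=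
          fun hc => h (mem_of_preimage_eq f.fv hbox hc)
        rw [I.embed_of_not_mem h, L.embed_of_not_mem h']
        rfl
  map_ty := by
    rintro (v | v)
    · exact f.map_ty v
    · exact f.map_ty v.1

/-- The morphism `KILL_b(I) → KILL_{f(b)}(L)` obtained by restricting `f`. -/
def killHom {I : TGraph VI EI} {L : TGraph VL EL}
    (f : GHom I L) (b : VI)
    (hbox : f.fv ⁻¹' (L.bsucc (f.fv b)) = I.bsucc b) :
    GHom (I.killGraph b) (L.killGraph (f.fv b)) where
  fv v := ⟨f.fv v.1, fun hc => v.2 (mem_of_preimage_eq f.fv hbox hc)⟩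
  fe e := ⟨f.fe e.1, by
    refine ⟨?_, ?_⟩
    · show L.s (f.fe e.1) ∉ L.bsucc (f.fv b)
      rw [f.map_s]
      exact fun hc => e.2.1 (mem_of_preimage_eq f.fv hbox hc)
    · show L.t (f.fe e.1) ∉ L.bsucc (f.fv b)
      rw [f.map_t]
      exact fun hc => e.2.2 (mem_of_preimage_eq f.fv hbox hc)⟩
  map_s e := Subtype.ext (f.map_s e.1)
  map_t e := Subtype.ext (f.map_t e.1)
  map_ty v := f.map_ty v.1

/-- The morphism `DROP_b(I) → DROP_{f(b)}(L)` obtained by restricting `f`. -/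
def dropHom {I : TGraph VI EI} {L : TGraph VL EL}
    (f : GHom I L) (b : VI)
    (hne : ∀ v, v ≠ b → f.fv v ≠ f.fv b) :
    GHom (I.dropGraph b) (L.dropGraph (f.fv b)) where
  fv v := ⟨f.fv v.1, hne v.1 v.2⟩
  fe e := ⟨f.fe e.1, by
    refine ⟨?_, ?_⟩
    · show L.s (f.fe e.1) ≠ f.fv b
      rw [f.map_s]
      exact hne _ e.2.1
    · show L.t (f.fe e.1) ≠ f.fv b
      rw [f.map_t]
      exact hne _ e.2.2⟩
  map_s e := Subtype.ext (f.map_s e.1)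
  map_t e := Subtype.ext (f.map_t e.1)
  map_ty v := f.map_ty v.1

/-- The vertex component of the induced morphism between merges. -/
def mergeVMap {I : TGraph VI EI} {L : TGraph VL EL}
    (f : GHom I L) (b b' : VI) :
    Quot (mergeVRel b b') → Quot (mergeVRel (f.fv b) (f.fv b')) :=
  Quot.lift (fun v => Quot.mk _ (f.fv v)) (by
    intro v₁ v₂ h
    rcases h with h | ⟨h1, h2⟩ | ⟨h1, h2⟩
    · rw [h]
    · subst h1; subst h2; exact Quot.sound (Or.inr (Or.inl ⟨rfl, rfl⟩))
    · subst h1; subst h2; exact Quot.sound (Or.inr (Or.inr ⟨rfl, rfl⟩)))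

theorem mergeVMap_mk {I : TGraph VI EI} {L : TGraph VL EL}
    (f : GHom I L) (b b' : VI) (v : VI) :
    mergeVMap f b b' (Quot.mk _ v) = Quot.mk _ (f.fv v) := rfl

theorem mergeGraph_s_mk {V E : Type} (G : TGraph V E) (b b' : V) (e : E) :
    (G.mergeGraph b b').s (Quot.mk _ e) = Quot.mk _ (G.s e) := rfl

theorem mergeGraph_t_mk {V E : Type} (G : TGraph V E) (b b' : V) (e : E) :
    (G.mergeGraph b b').t (Quot.mk _ e) = Quot.mk _ (G.t e) := rfl

/-- The edge component of the induced morphism between merges. -/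
def mergeEMap {I : TGraph VI EI} {L : TGraph VL EL}
    (f : GHom I L) (b b' : VI) :
    Quot (I.mergeERel b b') → Quot (L.mergeERel (f.fv b) (f.fv b')) :=
  Quot.lift (fun e => Quot.mk _ (f.fe e)) (by
    intro e₁ e₂ h
    rcases h with h | ⟨h1, h2, h3, h4⟩ | ⟨h1, h2, h3, h4⟩
    · rw [h]
    · refine Quot.sound (Or.inr (Or.inl ⟨⟨?_, ?_⟩, ⟨?_, ?_⟩, ?_, ?_⟩))
      · rw [f.map_s]; exact f.mem_bpred h1.1
      · rw [f.map_t]; exact f.mem_bpred h1.2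
      · rw [f.map_s]; exact f.mem_bpred h2.1
      · rw [f.map_t]; exact f.mem_bpred h2.2
      · have h3' := congrArg (mergeVMap f b b') h3
        rw [mergeVMap_mk, mergeVMap_mk] at h3'
        rw [f.map_s, f.map_s]; exact h3'
      · have h4' := congrArg (mergeVMap f b b') h4
        rw [mergeVMap_mk, mergeVMap_mk] at h4'
        rw [f.map_t, f.map_t]; exact h4'
    · refine Quot.sound (Or.inr (Or.inr ⟨⟨?_, ?_⟩, ⟨?_, ?_⟩, ?_, ?_⟩))
      · rw [f.map_s]; exact f.mem_bpred h1.1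
      · rw [f.map_t]; exact f.mem_bpred h1.2
      · rw [f.map_s]; exact f.mem_bpred h2.1
      · rw [f.map_t]; exact f.mem_bpred h2.2
      · have h3' := congrArg (mergeVMap f b b') h3
        rw [mergeVMap_mk, mergeVMap_mk] at h3'
        rw [f.map_s, f.map_s]; exact h3'
      · have h4' := congrArg (mergeVMap f b b') h4
        rw [mergeVMap_mk, mergeVMap_mk] at h4'
        rw [f.map_t, f.map_t]; exact h4')

theorem mergeEMap_mk {I : TGraph VI EI} {L : TGraph VL EL}
    (f : GHom I L) (b b' : VI) (e : EI) :
    mergeEMap f b b' (Quot.mk _ e) = Quot.mk _ (f.fe e) := rfl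

/-- The morphism `MERGE_{b,b'}(I) → MERGE_{f(b),f(b')}(L)` induced between the
coequalisers by a morphism `f : I → L`. -/
noncomputable def mergeHom {I : TGraph VI EI} {L : TGraph VL EL}
    (f : GHom I L) (b b' : VI)
    (hinj : ∀ v, f.fv v = f.fv b' → v = b') :
    GHom (I.mergeGraph b b') (L.mergeGraph (f.fv b) (f.fv b')) where
  fv := mergeVMap f b b'
  fe := mergeEMap f b b'
  map_s := by
    refine Quot.ind ?_
    intro e
    rw [mergeEMap_mk, mergeGraph_s_mk, mergeGraph_s_mk, mergeVMap_mk, f.map_s]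
  map_t := by
    refine Quot.ind ?_
    intro e
    rw [mergeEMap_mk, mergeGraph_t_mk, mergeGraph_t_mk, mergeVMap_mk, f.map_t]
  map_ty := by
    refine Quot.ind ?_
    intro v
    change (L.mergeGraph (f.fv b) (f.fv b')).ty (Quot.mk _ (f.fv v)) =
      (I.mergeGraph b b').ty (Quot.mk _ v)
    rw [mergeGraph_ty_mk, mergeGraph_ty_mk]
    split_ifs with h1 h2 h2
    · exact f.map_ty b
    · exact absurd (hinj v h1) h2
    · exact absurd (congrArg f.fv h2) h1
    · exact f.map_ty v

end TGraph

namespace TGraph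

variable {V E : Type} {G : TGraph V E}

theorem wire_ne_bang : (VTy.wire = VTy.bang) ↔ False := by simp

theorem isOpen_fullSub (G : TGraph V E) (S : Set V)
    (h1 : ∀ e, G.s e ∈ S → G.t e ∉ S → G.ty (G.t e) = .wire → G.ty (G.s e) = .bang)
    (h2 : ∀ e, G.s e ∉ S → G.t e ∈ S → G.ty (G.s e) ≠ .wire) :
    (G.fullSub S).IsOpen := by
  constructor
  · rintro v ⟨⟨-, hv⟩, hw, hin⟩
    refine ⟨trivial, hw, fun e _ hte => ?_⟩
    by_cases hs : G.s e ∈ S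
    · exact h1 e hs (hte ▸ hv) (hte ▸ hw)
    · exact hin e ⟨trivial, hs, hte ▸ hv⟩ hte
  · rintro v ⟨⟨-, hv⟩, hw, hout⟩
    refine ⟨trivial, hw, fun e _ hse => ?_⟩
    by_cases ht : G.t e ∈ S
    · exact h2 e (hse ▸ hv) ht (hse ▸ hw)
    · exact hout e ⟨trivial, hse ▸ hv, ht⟩ hse

/-- K1: in a pattern graph, an edge from inside a !-box to a wire-vertex
outside it must have a !-vertex source. -/
theorem in_box_bang (hp : G.IsPattern) {c : V} (hc : G.ty c = .bang) {e : E}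
    (hs : G.s e ∈ G.bsucc c) (ht : G.t e ∉ G.bsucc c)
    (htw : G.ty (G.t e) = .wire) : G.ty (G.s e) = .bang := by
  by_contra hns
  have hinput : ((Sub.top G).minus (G.bbox c)).IsInput (G.t e) := by
    refine ⟨⟨trivial, ht⟩, htw, fun e' he' hte' => ?_⟩
    by_contra hns'
    have hσ : e ∈ G.sigmaEdges := ⟨hns, by rw [htw]; simp⟩
    have hσ' : e' ∈ G.sigmaEdges := ⟨hns', by rw [hte', htw]; simp⟩
    have heq := (hp.2.1.2 (G.t e) htw).1 e' e hσ' hσ hte' rfl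
    exact he'.2.1 (heq ▸ hs)
  exact hns (((hp.2.2.2.1 c hc).1 _ hinput).2.2 e trivial rfl)

/-- K2: in a pattern graph, there is no edge from a wire-vertex outside a
!-box into the box. -/
theorem out_box_false (hp : G.IsPattern) {c : V} (hc : G.ty c = .bang) {e : E}
    (hs : G.s e ∉ G.bsucc c) (ht : G.t e ∈ G.bsucc c)
    (hsw : G.ty (G.s e) = .wire) : False := by
  have hσ : e ∈ G.sigmaEdges := by
    refine ⟨by rw [hsw]; simp, fun hb => ?_⟩
    rw [hp.1.2 e hb] at hsw; exact absurd hsw (by simp)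
  have houtput : ((Sub.top G).minus (G.bbox c)).IsOutput (G.s e) := by
    refine ⟨⟨trivial, hs⟩, hsw, fun e' he' hse' => ?_⟩
    have hσ' : e' ∈ G.sigmaEdges := by
      refine ⟨by rw [hse', hsw]; simp, fun hb => ?_⟩
      have := hp.1.2 e' hb
      rw [hse', hsw] at this; exact absurd this (by simp)
    have heq := (hp.2.1.2 (G.s e) hsw).2 e' e hσ' hσ hse' rfl
    exact he'.2.2 (heq ▸ ht)
  exact ((hp.2.2.2.1 c hc).2 _ houtput).2.2 e trivial rfl

/-! ### Restriction preserves patterns -/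

theorem mem_bsucc_restrict {S : Set V} {v w : {v : V // v ∈ S}} :
    w ∈ (G.restrict S).bsucc v ↔ w.1 ∈ G.bsucc v.1 := by
  constructor
  · rintro ⟨e, hs, ht⟩
    exact ⟨e.1, congrArg Subtype.val hs, congrArg Subtype.val ht⟩
  · rintro ⟨e, hs, ht⟩
    exact ⟨⟨e, hs ▸ v.2, ht ▸ w.2⟩, Subtype.ext hs, Subtype.ext ht⟩

theorem restrict_isPattern (hp : G.IsPattern) (S : Set V) :
    (G.restrict S).IsPattern := by
  obtain ⟨⟨hnn, hg3⟩, ⟨-, hstr⟩, ⟨hsim, hrefl, hanti, htrans⟩, hopen, hnest⟩ := hp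
  refine ⟨⟨fun e he => hnn e.1 he, fun e he => hg3 e.1 he⟩,
    ⟨fun e he => hnn e.1 he, fun v hv => ?_⟩,
    ⟨fun e₁ e₂ h1 h2 hs ht => ?_, fun v hv => ?_, fun v w hv hw h1 h2 => ?_,
      fun a u c ha hu hc h1 h2 => ?_⟩,
    fun c hc => ?_, fun v w hv hw h1 => ?_⟩
  · refine ⟨fun e₁ e₂ h1 h2 ht1 ht2 => ?_, fun e₁ e₂ h1 h2 hs1 hs2 => ?_⟩
    · exact Subtype.ext ((hstr v.1 hv).1 e₁.1 e₂.1 h1 h2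
        (congrArg Subtype.val ht1) (congrArg Subtype.val ht2))
    · exact Subtype.ext ((hstr v.1 hv).2 e₁.1 e₂.1 h1 h2
        (congrArg Subtype.val hs1) (congrArg Subtype.val hs2))
  · exact Subtype.ext (hsim e₁.1 e₂.1 h1 h2
      (congrArg Subtype.val hs) (congrArg Subtype.val ht))
  · exact mem_bsucc_restrict.2 (hrefl v.1 hv)
  · exact Subtype.ext (hanti v.1 w.1 hv hw (mem_bsucc_restrict.1 h1)
      (mem_bsucc_restrict.1 h2))
  · exact mem_bsucc_restrict.2 (htrans a.1 u.1 c.1 ha hu hc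
      (mem_bsucc_restrict.1 h1) (mem_bsucc_restrict.1 h2))
  · refine isOpen_fullSub _ _ (fun e hs ht hw => ?_) (fun e hs ht hw => ?_)
    · exact in_box_bang ⟨⟨hnn, hg3⟩, ⟨hnn, hstr⟩, ⟨hsim, hrefl, hanti, htrans⟩,
        hopen, hnest⟩ hc (mem_bsucc_restrict.1 hs)
        (fun hmem => ht (mem_bsucc_restrict.2 hmem)) hw
    · exact out_box_false ⟨⟨hnn, hg3⟩, ⟨hnn, hstr⟩, ⟨hsim, hrefl, hanti, htrans⟩,
        hopen, hnest⟩ hc (fun hmem => hs (mem_bsucc_restrict.2 hmem))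
        (mem_bsucc_restrict.1 ht) hw
  · intro x hx
    exact mem_bsucc_restrict.2 (hnest v.1 w.1 hv hw (mem_bsucc_restrict.1 h1)
      (mem_bsucc_restrict.1 hx))

end TGraph
namespace TGraph

variable {V E : Type} {G : TGraph V E} {b : V}

theorem embed_eq_inl {v w : V} :
    G.embed b v = Sum.inl w ↔ v ∉ G.bsucc b ∧ v = w := by
  by_cases h : v ∈ G.bsucc b
  · rw [G.embed_of_mem h]; simp [h]
  · rw [G.embed_of_not_mem h]; simp [h]

theorem embed_eq_inr {v : V} {w : {w : V // w ∈ G.bsucc b}} :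
    G.embed b v = Sum.inr w ↔ v = w.1 := by
  by_cases h : v ∈ G.bsucc b
  · rw [G.embed_of_mem h]; simp [Subtype.ext_iff]
  · rw [G.embed_of_not_mem h]
    simp only [reduceCtorEq, false_iff]
    rintro rfl; exact h w.2

theorem ty_embed (v : V) : (G.copyGraph b).ty (G.embed b v) = G.ty v := by
  by_cases h : v ∈ G.bsucc b
  · rw [G.embed_of_mem h]; rfl
  · rw [G.embed_of_not_mem h]; rfl

theorem bsucc_copy_inl_inl {v w : V} :
    Sum.inl w ∈ (G.copyGraph b).bsucc (Sum.inl v) ↔ w ∈ G.bsucc v := by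
  constructor
  · rintro ⟨(e | e), hs, ht⟩
    · exact ⟨e, Sum.inl.inj hs, Sum.inl.inj ht⟩
    · have hs' := embed_eq_inl.1 hs
      have ht' := embed_eq_inl.1 ht
      exact (e.2.elim hs'.1 ht'.1).elim
  · rintro ⟨e, hs, ht⟩
    exact ⟨Sum.inl e, congrArg _ hs, congrArg _ ht⟩

theorem bsucc_copy_inl_inr {v : V} {w : {w : V // w ∈ G.bsucc b}} :
    Sum.inr w ∈ (G.copyGraph b).bsucc (Sum.inl v) ↔
      v ∉ G.bsucc b ∧ w.1 ∈ G.bsucc v := by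
  constructor
  · rintro ⟨(e | e), hs, ht⟩
    · exact absurd ht (by simp [copyGraph])
    · obtain ⟨hs1, hs2⟩ := embed_eq_inl.1 hs
      have ht' := embed_eq_inr.1 ht
      exact ⟨hs2 ▸ hs1, ⟨e.1, hs2, ht'⟩⟩
  · rintro ⟨hv, e, hs, ht⟩
    refine ⟨Sum.inr ⟨e, Or.inr (ht ▸ w.2)⟩, ?_, ?_⟩
    · show G.embed b (G.s e) = _
      rw [hs, G.embed_of_not_mem hv]
    · show G.embed b (G.t e) = _
      rw [embed_eq_inr]; exact ht

theorem bsucc_copy_inr_inl {w : V} {v : {w : V // w ∈ G.bsucc b}} :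
    Sum.inl w ∈ (G.copyGraph b).bsucc (Sum.inr v) ↔
      w ∉ G.bsucc b ∧ w ∈ G.bsucc v.1 := by
  constructor
  · rintro ⟨(e | e), hs, ht⟩
    · exact absurd hs (by simp [copyGraph])
    · have hs' := embed_eq_inr.1 hs
      obtain ⟨ht1, ht2⟩ := embed_eq_inl.1 ht
      exact ⟨ht2 ▸ ht1, ⟨e.1, hs', ht2⟩⟩
  · rintro ⟨hw, e, hs, ht⟩
    refine ⟨Sum.inr ⟨e, Or.inl (hs ▸ v.2)⟩, ?_, ?_⟩
    · show G.embed b (G.s e) = _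
      rw [embed_eq_inr]; exact hs
    · show G.embed b (G.t e) = _
      rw [ht, G.embed_of_not_mem hw]

theorem bsucc_copy_inr_inr {v w : {w : V // w ∈ G.bsucc b}} :
    Sum.inr w ∈ (G.copyGraph b).bsucc (Sum.inr v) ↔ w.1 ∈ G.bsucc v.1 := by
  constructor
  · rintro ⟨(e | e), hs, ht⟩
    · exact absurd hs (by simp [copyGraph])
    · exact ⟨e.1, embed_eq_inr.1 hs, embed_eq_inr.1 ht⟩
  · rintro ⟨e, hs, ht⟩
    refine ⟨Sum.inr ⟨e, Or.inl (hs ▸ v.2)⟩, ?_, ?_⟩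
    · show G.embed b (G.s e) = _
      rw [embed_eq_inr]; exact hs
    · show G.embed b (G.t e) = _
      rw [embed_eq_inr]; exact ht

theorem copy_isPattern (hp : G.IsPattern) (hb : G.ty b = .bang) :
    (G.copyGraph b).IsPattern := by
  obtain ⟨⟨hnn, hg3⟩, ⟨-, hstr⟩, ⟨hsim, hrefl, hanti, htrans⟩, hopen, hnest⟩ := hp
  have hp' : G.IsPattern :=
    ⟨⟨hnn, hg3⟩, ⟨hnn, hstr⟩, ⟨hsim, hrefl, hanti, htrans⟩, hopen, hnest⟩
  set C := G.copyGraph b with hC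
  have tyinl : ∀ v : V, C.ty (Sum.inl v) = G.ty v := fun _ => rfl
  have tyinr : ∀ w : {w : V // w ∈ G.bsucc b}, C.ty (Sum.inr w) = G.ty w.1 :=
    fun _ => rfl
  have sinl : ∀ e : E, C.s (Sum.inl e) = Sum.inl (G.s e) := fun _ => rfl
  have tinl : ∀ e : E, C.t (Sum.inl e) = Sum.inl (G.t e) := fun _ => rfl
  have sinr : ∀ e : {e : E // G.s e ∈ G.bsucc b ∨ G.t e ∈ G.bsucc b},
      C.s (Sum.inr e) = G.embed b (G.s e.1) := fun _ => rfl
  have tinr : ∀ e, C.t (Sum.inr e) = G.embed b (G.t e.1) := fun _ => rfl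
  have nestB : ∀ v, G.ty v = .bang → v ∈ G.bsucc b → G.bsucc v ⊆ G.bsucc b :=
    fun v hv hvB => hnest b v hb hv hvB
  -- underlying source/target/sigma facts for copy edges
  have tyS : ∀ ε : E ⊕ {e : E // G.s e ∈ G.bsucc b ∨ G.t e ∈ G.bsucc b},
      C.ty (C.s ε) = G.ty (G.s (Sum.elim id Subtype.val ε)) := by
    rintro (e | e)
    · rfl
    · rw [sinr, ty_embed]; rfl
  have tyT : ∀ ε : E ⊕ {e : E // G.s e ∈ G.bsucc b ∨ G.t e ∈ G.bsucc b},
      C.ty (C.t ε) = G.ty (G.t (Sum.elim id Subtype.val ε)) := by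
    rintro (e | e)
    · rfl
    · rw [tinr, ty_embed]; rfl
  refine ⟨⟨?_, ?_⟩, ⟨?_, ?_⟩, ⟨?_, ?_, ?_, ?_⟩, ?_, ?_⟩
  · -- NoNodeNode
    intro ε hε
    rw [tyS, tyT] at hε
    exact hnn _ hε
  · -- G3
    intro ε hε
    rw [tyT] at hε
    rw [tyS]
    exact hg3 _ hε
  · intro ε hε
    rw [tyS, tyT] at hε
    exact hnn _ hε
  · -- string graph property
    intro x hx
    have sigU : ∀ ε, ε ∈ C.sigmaEdges → (Sum.elim id Subtype.val ε) ∈ G.sigmaEdges := by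
      intro ε hε
      exact ⟨by rw [← tyS]; exact hε.1, by rw [← tyT]; exact hε.2⟩
    constructor
    · -- in-edge uniqueness
      intro ε₁ ε₂ h1 h2 ht1 ht2
      match x, ε₁, ε₂ with
      | Sum.inl v, Sum.inl e₁, Sum.inl e₂ =>
        have := (hstr v hx).1 e₁ e₂ (sigU _ h1) (sigU _ h2)
          (Sum.inl.inj ht1) (Sum.inl.inj ht2)
        rw [this]
      | Sum.inl v, Sum.inl e₁, Sum.inr e₂ =>
        exfalso
        obtain ⟨hB, hteq⟩ := embed_eq_inl.1 (ht2 : G.embed b (G.t e₂.1) = Sum.inl v)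
        have heq := (hstr v hx).1 e₁ e₂.1 (sigU _ h1) (sigU _ h2)
          (Sum.inl.inj ht1) hteq
        have hsB : G.s e₂.1 ∈ G.bsucc b := e₂.2.resolve_right (hteq ▸ hB)
        exact (sigU _ h2).1 (in_box_bang hp' hb hsB (hteq ▸ hB) (hteq.symm ▸ hx))
      | Sum.inl v, Sum.inr e₁, Sum.inl e₂ =>
        exfalso
        obtain ⟨hB, hteq⟩ := embed_eq_inl.1 (ht1 : G.embed b (G.t e₁.1) = Sum.inl v)
        have hsB : G.s e₁.1 ∈ G.bsucc b := e₁.2.resolve_right (hteq ▸ hB)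
        exact (sigU _ h1).1 (in_box_bang hp' hb hsB (hteq ▸ hB) (hteq.symm ▸ hx))
      | Sum.inl v, Sum.inr e₁, Sum.inr e₂ =>
        exfalso
        exact absurd (ht1 : G.embed b (G.t e₁.1) = Sum.inl v)
          (by obtain ⟨hB, hteq⟩ := embed_eq_inl.1
                (ht2 : G.embed b (G.t e₂.1) = Sum.inl v)
              intro hc
              obtain ⟨hB', hteq'⟩ := embed_eq_inl.1 hc
              have hsB : G.s e₁.1 ∈ G.bsucc b := e₁.2.resolve_right (hteq' ▸ hB')
              exact (sigU _ h1).1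
                (in_box_bang hp' hb hsB (hteq' ▸ hB') (hteq'.symm ▸ hx)))
      | Sum.inr w, Sum.inl e₁, _ =>
        exact absurd ht1 (by simp [C, copyGraph])
      | Sum.inr w, Sum.inr e₁, Sum.inl e₂ =>
        exact absurd ht2 (by simp [C, copyGraph])
      | Sum.inr w, Sum.inr e₁, Sum.inr e₂ =>
        have h1' := embed_eq_inr.1 (ht1 : G.embed b (G.t e₁.1) = Sum.inr w)
        have h2' := embed_eq_inr.1 (ht2 : G.embed b (G.t e₂.1) = Sum.inr w)
        have := (hstr w.1 hx).1 e₁.1 e₂.1 (sigU _ h1) (sigU _ h2) h1' h2'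
        rw [Subtype.ext this]
    · -- out-edge uniqueness
      intro ε₁ ε₂ h1 h2 hs1 hs2
      match x, ε₁, ε₂ with
      | Sum.inl v, Sum.inl e₁, Sum.inl e₂ =>
        have := (hstr v hx).2 e₁ e₂ (sigU _ h1) (sigU _ h2)
          (Sum.inl.inj hs1) (Sum.inl.inj hs2)
        rw [this]
      | Sum.inl v, Sum.inl e₁, Sum.inr e₂ =>
        exfalso
        obtain ⟨hB, hseq⟩ := embed_eq_inl.1 (hs2 : G.embed b (G.s e₂.1) = Sum.inl v)
        have htB : G.t e₂.1 ∈ G.bsucc b := e₂.2.resolve_left (hseq ▸ hB)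
        exact out_box_false hp' hb (hseq ▸ hB) htB (hseq.symm ▸ hx)
      | Sum.inl v, Sum.inr e₁, Sum.inl e₂ =>
        exfalso
        obtain ⟨hB, hseq⟩ := embed_eq_inl.1 (hs1 : G.embed b (G.s e₁.1) = Sum.inl v)
        have htB : G.t e₁.1 ∈ G.bsucc b := e₁.2.resolve_left (hseq ▸ hB)
        exact out_box_false hp' hb (hseq ▸ hB) htB (hseq.symm ▸ hx)
      | Sum.inl v, Sum.inr e₁, Sum.inr e₂ =>
        exfalso
        obtain ⟨hB, hseq⟩ := embed_eq_inl.1 (hs1 : G.embed b (G.s e₁.1) = Sum.inl v)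
        have htB : G.t e₁.1 ∈ G.bsucc b := e₁.2.resolve_left (hseq ▸ hB)
        exact out_box_false hp' hb (hseq ▸ hB) htB (hseq.symm ▸ hx)
      | Sum.inr w, Sum.inl e₁, _ =>
        exact absurd hs1 (by simp [C, copyGraph])
      | Sum.inr w, Sum.inr e₁, Sum.inl e₂ =>
        exact absurd hs2 (by simp [C, copyGraph])
      | Sum.inr w, Sum.inr e₁, Sum.inr e₂ =>
        have h1' := embed_eq_inr.1 (hs1 : G.embed b (G.s e₁.1) = Sum.inr w)
        have h2' := embed_eq_inr.1 (hs2 : G.embed b (G.s e₂.1) = Sum.inr w)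
        have := (hstr w.1 hx).2 e₁.1 e₂.1 (sigU _ h1) (sigU _ h2) h1' h2'
        rw [Subtype.ext this]
  · -- beta simplicity
    intro ε₁ ε₂ h1 h2 hs ht
    match ε₁, ε₂ with
    | Sum.inl e₁, Sum.inl e₂ =>
      have := hsim e₁ e₂ ⟨h1.1, h1.2⟩ ⟨h2.1, h2.2⟩ (Sum.inl.inj hs) (Sum.inl.inj ht)
      rw [this]
    | Sum.inl e₁, Sum.inr e₂ =>
      exfalso
      have hs' := embed_eq_inl.1 ((hs.symm) : G.embed b (G.s e₂.1) = Sum.inl (G.s e₁))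
      have ht' := embed_eq_inl.1 ((ht.symm) : G.embed b (G.t e₂.1) = Sum.inl (G.t e₁))
      exact e₂.2.elim hs'.1 ht'.1
    | Sum.inr e₁, Sum.inl e₂ =>
      exfalso
      have hs' := embed_eq_inl.1 (hs : G.embed b (G.s e₁.1) = Sum.inl (G.s e₂))
      have ht' := embed_eq_inl.1 (ht : G.embed b (G.t e₁.1) = Sum.inl (G.t e₂))
      exact e₁.2.elim hs'.1 ht'.1
    | Sum.inr e₁, Sum.inr e₂ =>
      have hβ1 : e₁.1 ∈ G.betaEdges := ⟨by rw [← ty_embed (G.s e₁.1)]; exact h1.1,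
        by rw [← ty_embed (G.t e₁.1)]; exact h1.2⟩
      have hβ2 : e₂.1 ∈ G.betaEdges := ⟨by rw [← ty_embed (G.s e₂.1)]; exact h2.1,
        by rw [← ty_embed (G.t e₂.1)]; exact h2.2⟩
      have hsem : G.embed b (G.s e₁.1) = G.embed b (G.s e₂.1) := hs
      have htem : G.embed b (G.t e₁.1) = G.embed b (G.t e₂.1) := ht
      have hse : G.s e₁.1 = G.s e₂.1 := by
        by_cases hm : G.s e₂.1 ∈ G.bsucc b
        · rw [G.embed_of_mem hm] at hsem; exact embed_eq_inr.1 hsem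
        · rw [G.embed_of_not_mem hm] at hsem; exact (embed_eq_inl.1 hsem).2
      have hte : G.t e₁.1 = G.t e₂.1 := by
        by_cases hm : G.t e₂.1 ∈ G.bsucc b
        · rw [G.embed_of_mem hm] at htem; exact embed_eq_inr.1 htem
        · rw [G.embed_of_not_mem hm] at htem; exact (embed_eq_inl.1 htem).2
      rw [Subtype.ext (hsim e₁.1 e₂.1 hβ1 hβ2 hse hte)]
  · -- reflexivity
    rintro (v | w) hx
    · exact bsucc_copy_inl_inl.2 (hrefl v hx)
    · exact bsucc_copy_inr_inr.2 (hrefl w.1 hx)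
  · -- antisymmetry
    rintro (v | v) (w | w) hv hw h1 h2
    · rw [hanti v w hv hw (bsucc_copy_inl_inl.1 h1) (bsucc_copy_inl_inl.1 h2)]
    · obtain ⟨hvB, h1'⟩ := bsucc_copy_inl_inr.1 h1
      obtain ⟨-, h2'⟩ := bsucc_copy_inr_inl.1 h2
      exact absurd (hanti v w.1 hv hw h1' h2' ▸ w.2) hvB
    · obtain ⟨-, h1'⟩ := bsucc_copy_inr_inl.1 h1
      obtain ⟨hwB, h2'⟩ := bsucc_copy_inl_inr.1 h2
      exact absurd (hanti v.1 w hv hw h1' h2' ▸ v.2) hwB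
    · rw [Subtype.ext (hanti v.1 w.1 hv hw (bsucc_copy_inr_inr.1 h1)
        (bsucc_copy_inr_inr.1 h2))]
  · -- transitivity
    rintro (va | va) (vu | vu) (vc | vc) ha hu hc h1 h2
    · exact bsucc_copy_inl_inl.2
        (htrans va vu vc ha hu hc (bsucc_copy_inl_inl.1 h1) (bsucc_copy_inl_inl.1 h2))
    · obtain ⟨huB, h2'⟩ := bsucc_copy_inl_inr.1 h2
      have h1' := bsucc_copy_inl_inl.1 h1
      refine bsucc_copy_inl_inr.2 ⟨fun haB => huB (nestB va ha haB h1'), ?_⟩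
      exact htrans va vu vc.1 ha hu hc h1' h2'
    · obtain ⟨haB, h1'⟩ := bsucc_copy_inl_inr.1 h1
      obtain ⟨hcB, h2'⟩ := bsucc_copy_inr_inl.1 h2
      exact bsucc_copy_inl_inl.2 (htrans va vu.1 vc ha hu hc h1' h2')
    · obtain ⟨haB, h1'⟩ := bsucc_copy_inl_inr.1 h1
      have h2' := bsucc_copy_inr_inr.1 h2
      exact bsucc_copy_inl_inr.2 ⟨haB, htrans va vu.1 vc.1 ha hu hc h1' h2'⟩
    · obtain ⟨huB, h1'⟩ := bsucc_copy_inr_inl.1 h1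
      exact absurd (nestB va.1 ha va.2 h1') huB
    · obtain ⟨huB, h1'⟩ := bsucc_copy_inr_inl.1 h1
      exact absurd (nestB va.1 ha va.2 h1') huB
    · obtain ⟨hcB, h2'⟩ := bsucc_copy_inr_inl.1 h2
      have h1' := bsucc_copy_inr_inr.1 h1
      exact absurd (nestB vu.1 hu vu.2 h2') hcB
    · exact bsucc_copy_inr_inr.2
        (htrans va.1 vu.1 vc.1 ha hu hc (bsucc_copy_inr_inr.1 h1)
          (bsucc_copy_inr_inr.1 h2))
  · -- openness of boxes
    rintro (c | c) hc
    · refine isOpen_fullSub _ _ (fun ε hs ht hw => ?_) (fun ε hs ht hw => ?_)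
      · match ε with
        | Sum.inl e =>
          exact in_box_bang hp' hc (bsucc_copy_inl_inl.1 hs)
            (fun hm => ht (bsucc_copy_inl_inl.2 hm)) hw
        | Sum.inr e =>
          rw [tyT] at hw
          rw [tyS]
          have hsc : G.s e.1 ∈ G.bsucc c := by
            by_cases hsB : G.s e.1 ∈ G.bsucc b
            · have : C.s (Sum.inr e) = Sum.inr ⟨G.s e.1, hsB⟩ := by
                rw [sinr, G.embed_of_mem hsB]
              rw [this] at hs
              exact (bsucc_copy_inl_inr.1 hs).2
            · have : C.s (Sum.inr e) = Sum.inl (G.s e.1) := by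
                rw [sinr, G.embed_of_not_mem hsB]
              rw [this] at hs
              exact bsucc_copy_inl_inl.1 hs
          refine in_box_bang hp' hc hsc (fun hm => ?_) hw
          by_cases htB : G.t e.1 ∈ G.bsucc b
          · refine ht ?_
            have : C.t (Sum.inr e) = Sum.inr ⟨G.t e.1, htB⟩ := by
              rw [tinr, G.embed_of_mem htB]
            rw [this]
            refine bsucc_copy_inl_inr.2 ⟨fun hcB => ?_, hm⟩
            · by_cases hsB : G.s e.1 ∈ G.bsucc b
              · have : C.s (Sum.inr e) = Sum.inr ⟨G.s e.1, hsB⟩ := by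
                  rw [sinr, G.embed_of_mem hsB]
                rw [this] at hs
                exact (bsucc_copy_inl_inr.1 hs).1 hcB
              · exact hsB (nestB c hc hcB hsc)
          · refine ht ?_
            have : C.t (Sum.inr e) = Sum.inl (G.t e.1) := by
              rw [tinr, G.embed_of_not_mem htB]
            rw [this]
            exact bsucc_copy_inl_inl.2 hm
      · -- cond2, x = inl c: no wire source entering the box
        exfalso
        match ε with
        | Sum.inl e =>
          exact out_box_false hp' hc
            (fun hm => hs (bsucc_copy_inl_inl.2 hm)) (bsucc_copy_inl_inl.1 ht) hw
        | Sum.inr e =>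
          rw [tyS] at hw
          have htc : G.t e.1 ∈ G.bsucc c ∧
              (G.t e.1 ∈ G.bsucc b → c ∉ G.bsucc b) := by
            by_cases htB : G.t e.1 ∈ G.bsucc b
            · have : C.t (Sum.inr e) = Sum.inr ⟨G.t e.1, htB⟩ := by
                rw [tinr, G.embed_of_mem htB]
              rw [this] at ht
              obtain ⟨hcB, hm⟩ := bsucc_copy_inl_inr.1 ht
              exact ⟨hm, fun _ => hcB⟩
            · have : C.t (Sum.inr e) = Sum.inl (G.t e.1) := by
                rw [tinr, G.embed_of_not_mem htB]
              rw [this] at ht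
              exact ⟨bsucc_copy_inl_inl.1 ht, fun hm => absurd hm htB⟩
          refine out_box_false hp' hc (fun hm => ?_) htc.1 hw
          by_cases hsB : G.s e.1 ∈ G.bsucc b
          · have : C.s (Sum.inr e) = Sum.inr ⟨G.s e.1, hsB⟩ := by
              rw [sinr, G.embed_of_mem hsB]
            rw [this] at hs
            refine hs (bsucc_copy_inl_inr.2 ⟨fun hcB => ?_, hm⟩)
            by_cases htB : G.t e.1 ∈ G.bsucc b
            · exact htc.2 htB hcB
            · exact htB (nestB c hc hcB htc.1)
          · have : C.s (Sum.inr e) = Sum.inl (G.s e.1) := by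
              rw [sinr, G.embed_of_not_mem hsB]
            rw [this] at hs
            exact hs (bsucc_copy_inl_inl.2 hm)
    · -- x = inr c
      have hsub : G.bsucc c.1 ⊆ G.bsucc b := nestB c.1 hc c.2
      refine isOpen_fullSub _ _ (fun ε hs ht hw => ?_) (fun ε hs ht hw => ?_)
      · match ε with
        | Sum.inl e =>
          obtain ⟨hB, hm⟩ := bsucc_copy_inr_inl.1 hs
          exact absurd (hsub hm) hB
        | Sum.inr e =>
          rw [tyT] at hw
          rw [tyS]
          have hsB : G.s e.1 ∈ G.bsucc b := by
            by_contra hsB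
            have : C.s (Sum.inr e) = Sum.inl (G.s e.1) := by
              rw [sinr, G.embed_of_not_mem hsB]
            rw [this] at hs
            obtain ⟨hB, hm⟩ := bsucc_copy_inr_inl.1 hs
            exact hsB (hsub hm)
          have hsc : G.s e.1 ∈ G.bsucc c.1 := by
            have : C.s (Sum.inr e) = Sum.inr ⟨G.s e.1, hsB⟩ := by
              rw [sinr, G.embed_of_mem hsB]
            rw [this] at hs
            exact bsucc_copy_inr_inr.1 hs
          refine in_box_bang hp' hc hsc (fun hm => ?_) hw
          have htB : G.t e.1 ∈ G.bsucc b := hsub hm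
          refine ht ?_
          have : C.t (Sum.inr e) = Sum.inr ⟨G.t e.1, htB⟩ := by
            rw [tinr, G.embed_of_mem htB]
          rw [this]
          exact bsucc_copy_inr_inr.2 hm
      · exfalso
        match ε with
        | Sum.inl e =>
          obtain ⟨hB, hm⟩ := bsucc_copy_inr_inl.1 ht
          exact absurd (hsub hm) hB
        | Sum.inr e =>
          rw [tyS] at hw
          have htB : G.t e.1 ∈ G.bsucc b := by
            by_contra htB
            have : C.t (Sum.inr e) = Sum.inl (G.t e.1) := by
              rw [tinr, G.embed_of_not_mem htB]
            rw [this] at ht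
            obtain ⟨hB, hm⟩ := bsucc_copy_inr_inl.1 ht
            exact htB (hsub hm)
          have htc : G.t e.1 ∈ G.bsucc c.1 := by
            have : C.t (Sum.inr e) = Sum.inr ⟨G.t e.1, htB⟩ := by
              rw [tinr, G.embed_of_mem htB]
            rw [this] at ht
            exact bsucc_copy_inr_inr.1 ht
          refine out_box_false hp' hc (fun hm => ?_) htc hw
          have hsB : G.s e.1 ∈ G.bsucc b := hsub hm
          refine hs ?_
          have : C.s (Sum.inr e) = Sum.inr ⟨G.s e.1, hsB⟩ := by
            rw [sinr, G.embed_of_mem hsB]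
          rw [this]
          exact bsucc_copy_inr_inr.2 hm
  · -- nesting
    rintro (v | v) (w | w) hv hw h1 (z | z) hz
    · exact bsucc_copy_inl_inl.2
        (hnest v w hv hw (bsucc_copy_inl_inl.1 h1) (bsucc_copy_inl_inl.1 hz))
    · obtain ⟨hwB, hz'⟩ := bsucc_copy_inl_inr.1 hz
      have h1' := bsucc_copy_inl_inl.1 h1
      refine bsucc_copy_inl_inr.2 ⟨fun hvB => hwB (nestB v hv hvB h1'), ?_⟩
      exact hnest v w hv hw h1' hz'
    · obtain ⟨hvB, h1'⟩ := bsucc_copy_inl_inr.1 h1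
      obtain ⟨hzB, hz'⟩ := bsucc_copy_inr_inl.1 hz
      exact bsucc_copy_inl_inl.2 (hnest v w.1 hv hw h1' hz')
    · obtain ⟨hvB, h1'⟩ := bsucc_copy_inl_inr.1 h1
      exact bsucc_copy_inl_inr.2 ⟨hvB, hnest v w.1 hv hw h1' (bsucc_copy_inr_inr.1 hz)⟩
    · obtain ⟨hwB, h1'⟩ := bsucc_copy_inr_inl.1 h1
      exact absurd (nestB v.1 hv v.2 h1') hwB
    · obtain ⟨hwB, h1'⟩ := bsucc_copy_inr_inl.1 h1
      exact absurd (nestB v.1 hv v.2 h1') hwB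
    · obtain ⟨hzB, hz'⟩ := bsucc_copy_inr_inl.1 hz
      exact absurd (nestB w.1 hw w.2 hz') hzB
    · exact bsucc_copy_inr_inr.2
        (hnest v.1 w.1 hv hw (bsucc_copy_inr_inr.1 h1) (bsucc_copy_inr_inr.1 hz))

end TGraph
namespace TGraph

variable {V E : Type} {G : TGraph V E} {b : V}

theorem copy_isInput_inl {v : V} :
    (G.copyGraph b).IsInput (Sum.inl v) ↔ G.IsInput v := by
  constructor
  · rintro ⟨hw, h⟩
    exact ⟨hw, fun e hte => h (Sum.inl e) (congrArg _ hte)⟩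
  · rintro ⟨hw, h⟩
    refine ⟨hw, fun ε htε => ?_⟩
    match ε with
    | Sum.inl e => exact h e (Sum.inl.inj htε)
    | Sum.inr e =>
      have hteq := (embed_eq_inl.1 (htε : G.embed b (G.t e.1) = Sum.inl v)).2
      show (G.copyGraph b).ty (G.embed b (G.s e.1)) = .bang
      rw [ty_embed]
      exact h e.1 hteq

theorem copy_isInput_inr {w : {w : V // w ∈ G.bsucc b}} :
    (G.copyGraph b).IsInput (Sum.inr w) ↔ G.IsInput w.1 := by
  constructor
  · rintro ⟨hw, h⟩
    refine ⟨hw, fun e hte => ?_⟩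
    have := h (Sum.inr ⟨e, Or.inr (hte ▸ w.2)⟩) (embed_eq_inr.2 hte)
    rwa [show (G.copyGraph b).s (Sum.inr ⟨e, Or.inr (hte ▸ w.2)⟩) =
      G.embed b (G.s e) from rfl, ty_embed] at this
  · rintro ⟨hw, h⟩
    refine ⟨hw, fun ε htε => ?_⟩
    match ε with
    | Sum.inl e => exact absurd htε (by simp [copyGraph])
    | Sum.inr e =>
      have hteq := embed_eq_inr.1 (htε : G.embed b (G.t e.1) = Sum.inr w)
      show (G.copyGraph b).ty (G.embed b (G.s e.1)) = .bang
      rw [ty_embed]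
      exact h e.1 hteq

theorem copy_isOutput_inl {v : V} :
    (G.copyGraph b).IsOutput (Sum.inl v) ↔ G.IsOutput v := by
  constructor
  · rintro ⟨hw, h⟩
    exact ⟨hw, fun e hse => h (Sum.inl e) (congrArg _ hse)⟩
  · rintro ⟨hw, h⟩
    refine ⟨hw, fun ε hsε => ?_⟩
    match ε with
    | Sum.inl e => exact h e (Sum.inl.inj hsε)
    | Sum.inr e =>
      exact h e.1 (embed_eq_inl.1 (hsε : G.embed b (G.s e.1) = Sum.inl v)).2

theorem copy_isOutput_inr {w : {w : V // w ∈ G.bsucc b}} :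
    (G.copyGraph b).IsOutput (Sum.inr w) ↔ G.IsOutput w.1 := by
  constructor
  · rintro ⟨hw, h⟩
    exact ⟨hw, fun e hse =>
      h (Sum.inr ⟨e, Or.inl (hse ▸ w.2)⟩) (embed_eq_inr.2 hse)⟩
  · rintro ⟨hw, h⟩
    refine ⟨hw, fun ε hsε => ?_⟩
    match ε with
    | Sum.inl e => exact absurd hsε (by simp [copyGraph])
    | Sum.inr e =>
      exact h e.1 (embed_eq_inr.1 (hsε : G.embed b (G.s e.1) = Sum.inr w))

theorem drop_isInput_iff (hb : G.ty b = .bang) {v : {v : V // v ≠ b}} :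
    (G.dropGraph b).IsInput v ↔ G.IsInput v.1 := by
  constructor
  · rintro ⟨hw, h⟩
    refine ⟨hw, fun e hte => ?_⟩
    by_cases hsb : G.s e = b
    · rw [hsb]; exact hb
    · exact h ⟨e, hsb, hte ▸ v.2⟩ (Subtype.ext hte)
  · rintro ⟨hw, h⟩
    exact ⟨hw, fun ε htε => h ε.1 (congrArg Subtype.val htε)⟩

theorem drop_isOutput_iff (hg3 : ∀ e, G.ty (G.t e) = .bang → G.ty (G.s e) = .bang)
    (hb : G.ty b = .bang) {v : {v : V // v ≠ b}} :
    (G.dropGraph b).IsOutput v ↔ G.IsOutput v.1 := by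
  constructor
  · rintro ⟨hw, h⟩
    refine ⟨hw, fun e hse => ?_⟩
    by_cases htb : G.t e = b
    · have := hg3 e (htb ▸ hb)
      rw [hse] at this
      exact absurd ((hw : G.ty v.1 = VTy.wire).symm.trans this) (by simp)
    · exact h ⟨e, hse ▸ v.2, htb⟩ (Subtype.ext hse)
  · rintro ⟨hw, h⟩
    exact ⟨hw, fun ε hsε => h ε.1 (congrArg Subtype.val hsε)⟩

theorem kill_isInput_iff (hp : G.IsPattern) (hb : G.ty b = .bang)
    {v : {v : V // v ∉ G.bsucc b}} :
    (G.killGraph b).IsInput v ↔ G.IsInput v.1 := by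
  constructor
  · rintro ⟨hw, h⟩
    refine ⟨hw, fun e hte => ?_⟩
    by_cases hsb : G.s e ∈ G.bsucc b
    · exact in_box_bang hp hb hsb (hte ▸ v.2) (hte ▸ hw)
    · exact h ⟨e, hsb, hte ▸ v.2⟩ (Subtype.ext hte)
  · rintro ⟨hw, h⟩
    exact ⟨hw, fun ε htε => h ε.1 (congrArg Subtype.val htε)⟩

theorem kill_isOutput_iff (hp : G.IsPattern) (hb : G.ty b = .bang)
    {v : {v : V // v ∉ G.bsucc b}} :
    (G.killGraph b).IsOutput v ↔ G.IsOutput v.1 := by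
  constructor
  · rintro ⟨hw, h⟩
    refine ⟨hw, fun e hse => ?_⟩
    by_cases htb : G.t e ∈ G.bsucc b
    · exact absurd (out_box_false hp hb (hse ▸ v.2) htb (hse ▸ hw)) id
    · exact h ⟨e, hse ▸ v.2, htb⟩ (Subtype.ext hse)
  · rintro ⟨hw, h⟩
    exact ⟨hw, fun ε hsε => h ε.1 (congrArg Subtype.val hsε)⟩

end TGraph
set_option linter.unusedSectionVars false

namespace TGraph

variable {V E : Type} {G : TGraph V E} {b b' : V}

theorem mergeVRel_equivalence (b b' : V) : Equivalence (mergeVRel b b') := by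
  constructor
  · exact fun v => Or.inl rfl
  · rintro a c (rfl | ⟨rfl, rfl⟩ | ⟨rfl, rfl⟩)
    · exact Or.inl rfl
    · exact Or.inr (Or.inr ⟨rfl, rfl⟩)
    · exact Or.inr (Or.inl ⟨rfl, rfl⟩)
  · rintro a c d (rfl | ⟨rfl, rfl⟩ | ⟨rfl, rfl⟩) (h | ⟨h1, h2⟩ | ⟨h1, h2⟩) <;>
      subst_vars <;> unfold mergeVRel <;> tauto

theorem mergeVRel_mk_eq {v w : V} :
    Quot.mk (mergeVRel b b') v = Quot.mk (mergeVRel b b') w ↔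
      mergeVRel b b' v w := by
  rw [Quot.eq]
  exact (mergeVRel_equivalence b b').eqvGen_iff

theorem ty_mk' (hbb' : G.ty b = G.ty b') (v : V) :
    (G.mergeGraph b b').ty (Quot.mk _ v) = G.ty v := by
  rw [mergeGraph_ty_mk]
  split_ifs with h
  · rw [h, hbb']
  · rfl

theorem bang_of_rel (hb : G.ty b = .bang) (hb' : G.ty b' = .bang) {x y : V}
    (h : mergeVRel b b' x y) (hy : G.ty y = .bang) : G.ty x = .bang := by
  rcases h with rfl | ⟨rfl, -⟩ | ⟨rfl, -⟩
  · exact hy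
  · exact hb
  · exact hb'

theorem bpred_bang (hp : G.IsPattern) {c : V} (hc : G.ty c = .bang) :
    ∀ v ∈ G.bpred c, G.ty v = .bang := by
  rintro v ⟨e, hs, ht⟩
  have := hp.1.2 e (ht ▸ hc)
  rwa [hs] at this

theorem mem_bpred_self (hrefl : ∀ c, G.ty c = .bang → c ∈ G.bsucc c)
    {c : V} (hc : G.ty c = .bang) : c ∈ G.bpred c := by
  obtain ⟨e, hs, ht⟩ := hrefl c hc
  exact ⟨e, hs, ht⟩

theorem upEdges_inj (hp : G.IsPattern) {c : V} (hc : G.ty c = .bang)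
    (hexc : ¬(b ∈ G.bpred c ∧ b' ∈ G.bpred c)) {e₁ e₂ : E}
    (h1 : e₁ ∈ G.upEdges c) (h2 : e₂ ∈ G.upEdges c)
    (hs : Quot.mk (mergeVRel b b') (G.s e₁) = Quot.mk (mergeVRel b b') (G.s e₂))
    (ht : Quot.mk (mergeVRel b b') (G.t e₁) = Quot.mk (mergeVRel b b') (G.t e₂)) :
    e₁ = e₂ := by
  have hse : G.s e₁ = G.s e₂ := by
    rcases mergeVRel_mk_eq.1 hs with h | ⟨ha, ha'⟩ | ⟨ha, ha'⟩
    · exact h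
    · exact absurd ⟨ha ▸ h1.1, ha' ▸ h2.1⟩ hexc
    · exact absurd ⟨ha' ▸ h2.1, ha ▸ h1.1⟩ hexc
  have hte : G.t e₁ = G.t e₂ := by
    rcases mergeVRel_mk_eq.1 ht with h | ⟨ha, ha'⟩ | ⟨ha, ha'⟩
    · exact h
    · exact absurd ⟨ha ▸ h1.2, ha' ▸ h2.2⟩ hexc
    · exact absurd ⟨ha' ▸ h2.2, ha ▸ h1.2⟩ hexc
  exact hp.2.2.1.1 e₁ e₂ ⟨bpred_bang hp hc _ h1.1, bpred_bang hp hc _ h1.2⟩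
    ⟨bpred_bang hp hc _ h2.1, bpred_bang hp hc _ h2.2⟩ hse hte

section Mergable

variable (hp : G.IsPattern) (hb : G.ty b = .bang) (hb' : G.ty b' = .bang)
  (hpred : G.bpred b \ {b} = G.bpred b' \ {b'})
  (hdisj : G.bsucc b ∩ G.bsucc b' = ∅)

include hp hb hb' hdisj

theorem not_succ_bb' : b' ∉ G.bsucc b := fun h =>
  absurd (hdisj ▸ (⟨h, hp.2.2.1.2.1 b' hb'⟩ : b' ∈ G.bsucc b ∩ G.bsucc b'))
    (Set.notMem_empty b')

theorem not_succ_b'b : b ∉ G.bsucc b' := fun h =>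
  absurd (hdisj ▸ (⟨hp.2.2.1.2.1 b hb, h⟩ : b ∈ G.bsucc b ∩ G.bsucc b'))
    (Set.notMem_empty b)

theorem not_pred_bb' : b' ∉ G.bpred b := by
  rintro ⟨e, hs, ht⟩
  exact not_succ_b'b hp hb hb' hdisj ⟨e, hs, ht⟩

theorem not_pred_b'b : b ∉ G.bpred b' := by
  rintro ⟨e, hs, ht⟩
  exact not_succ_bb' hp hb hb' hdisj ⟨e, hs, ht⟩

theorem mergeERel_equivalence : Equivalence (G.mergeERel b b') := by
  have hrefl := hp.2.2.1.2.1
  have hexb : ¬(b ∈ G.bpred b ∧ b' ∈ G.bpred b) :=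
    fun h => not_pred_bb' hp hb hb' hdisj h.2
  have hexb' : ¬(b ∈ G.bpred b' ∧ b' ∈ G.bpred b') :=
    fun h => not_pred_b'b hp hb hb' hdisj h.1
  constructor
  · exact fun e => Or.inl rfl
  · rintro e₁ e₂ (rfl | ⟨h1, h2, h3, h4⟩ | ⟨h1, h2, h3, h4⟩)
    · exact Or.inl rfl
    · exact Or.inr (Or.inr ⟨h2, h1, h3.symm, h4.symm⟩)
    · exact Or.inr (Or.inl ⟨h2, h1, h3.symm, h4.symm⟩)
  · rintro e₁ e₂ e₃ (rfl | ⟨h1, h2, h3, h4⟩ | ⟨h1, h2, h3, h4⟩)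
      (h | ⟨g1, g2, g3, g4⟩ | ⟨g1, g2, g3, g4⟩)
    · exact Or.inl h
    · exact Or.inr (Or.inl ⟨g1, g2, g3, g4⟩)
    · exact Or.inr (Or.inr ⟨g1, g2, g3, g4⟩)
    · exact h ▸ Or.inr (Or.inl ⟨h1, h2, h3, h4⟩)
    · -- e₂ ∈ up b' from h2, e₂ ∈ up b from g1 : e₁ ∈ up b, e₃ ∈ up b'
      exact Or.inr (Or.inl ⟨h1, g2, h3.trans g3, h4.trans g4⟩)
    · -- e₁ ∈ up b, e₃ ∈ up b : show e₁ = e₃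
      exact Or.inl (upEdges_inj hp hb hexb h1 g2 (h3.trans g3) (h4.trans g4))
    · exact h ▸ Or.inr (Or.inr ⟨h1, h2, h3, h4⟩)
    · exact Or.inl (upEdges_inj hp hb' hexb' h1 g2 (h3.trans g3) (h4.trans g4))
    · exact Or.inr (Or.inr ⟨h1, g2, h3.trans g3, h4.trans g4⟩)

theorem mergeERel_mk_eq {e₁ e₂ : E} :
    Quot.mk (G.mergeERel b b') e₁ = Quot.mk (G.mergeERel b b') e₂ ↔
      G.mergeERel b b' e₁ e₂ := by
  rw [Quot.eq]
  exact (mergeERel_equivalence hp hb hb' hdisj).eqvGen_iff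

end Mergable

theorem mem_bsucc_mergeGraph {v w : V} :
    Quot.mk (mergeVRel b b') w ∈ (G.mergeGraph b b').bsucc (Quot.mk _ v) ↔
      ∃ v' w', mergeVRel b b' v' v ∧ mergeVRel b b' w' w ∧ w' ∈ G.bsucc v' := by
  constructor
  · rintro ⟨ε, hs, ht⟩
    obtain ⟨e, rfl⟩ := Quot.exists_rep ε
    rw [mergeGraph_s_mk] at hs
    rw [mergeGraph_t_mk] at ht
    exact ⟨G.s e, G.t e, mergeVRel_mk_eq.1 hs, mergeVRel_mk_eq.1 ht,
      ⟨e, rfl, rfl⟩⟩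
  · rintro ⟨v', w', hv, hw, e, hs, ht⟩
    refine ⟨Quot.mk _ e, ?_, ?_⟩
    · rw [mergeGraph_s_mk, hs]; exact mergeVRel_mk_eq.2 hv
    · rw [mergeGraph_t_mk, ht]; exact mergeVRel_mk_eq.2 hw

section Mergable2

variable (hp : G.IsPattern) (hb : G.ty b = .bang) (hb' : G.ty b' = .bang)
  (hpred : G.bpred b \ {b} = G.bpred b' \ {b'})
  (hdisj : G.bsucc b ∩ G.bsucc b' = ∅)

include hp hb hb' hpred hdisj

/-- Key transitivity-type lemma in the merged graph. -/
theorem merge_succ_trans {a v w : V}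
    (ha : G.ty a = .bang) (hv : G.ty v = .bang)
    (h1 : ∃ a' v', mergeVRel b b' a' a ∧ mergeVRel b b' v' v ∧ v' ∈ G.bsucc a')
    (h2 : ∃ v₂ w₂, mergeVRel b b' v₂ v ∧ mergeVRel b b' w₂ w ∧ w₂ ∈ G.bsucc v₂) :
    ∃ a' w', mergeVRel b b' a' a ∧ mergeVRel b b' w' w ∧ w' ∈ G.bsucc a' := by
  obtain ⟨⟨hnn, hg3⟩, ⟨-, hstr⟩, ⟨hsim, hrefl, hanti, htrans⟩, hopen, hnest⟩ := hp
  have hp' : G.IsPattern :=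
    ⟨⟨hnn, hg3⟩, ⟨hnn, hstr⟩, ⟨hsim, hrefl, hanti, htrans⟩, hopen, hnest⟩
  obtain ⟨a₁, v₁, ra1, rv1, hm1⟩ := h1
  obtain ⟨v₂, w₂, rv2, rw2, hm2⟩ := h2
  have ha1 : G.ty a₁ = .bang := bang_of_rel hb hb' ra1 ha
  have hv1 : G.ty v₁ = .bang := bang_of_rel hb hb' rv1 hv
  have r12 : mergeVRel b b' v₁ v₂ :=
    (mergeVRel_equivalence b b').trans rv1 ((mergeVRel_equivalence b b').symm rv2)
  rcases r12 with heq12 | ⟨h1b, h2b⟩ | ⟨h1b, h2b⟩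
  · exact ⟨a₁, w₂, ra1, rw2, hnest a₁ v₁ ha1 hv1 hm1 (heq12 ▸ hm2)⟩
  · -- v₁ = b, v₂ = b'
    rw [h1b] at hm1
    rw [h2b] at hm2
    by_cases hab : a₁ = b
    · refine ⟨b', w₂, ?_, rw2, hm2⟩
      exact (mergeVRel_equivalence b b').trans (Or.inr (Or.inr ⟨rfl, rfl⟩))
        (hab ▸ ra1)
    · have hmem : a₁ ∈ G.bpred b \ {b} := by
        refine ⟨?_, hab⟩
        obtain ⟨e, hs, ht⟩ := hm1
        exact ⟨e, hs, ht⟩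
      rw [hpred] at hmem
      obtain ⟨⟨e, hs, ht⟩, -⟩ := hmem
      have hb'succ : b' ∈ G.bsucc a₁ := ⟨e, hs, ht⟩
      exact ⟨a₁, w₂, ra1, rw2, hnest a₁ b' ha1 hb' hb'succ hm2⟩
  · -- v₁ = b', v₂ = b
    rw [h1b] at hm1
    rw [h2b] at hm2
    by_cases hab : a₁ = b'
    · refine ⟨b, w₂, ?_, rw2, hm2⟩
      exact (mergeVRel_equivalence b b').trans (Or.inr (Or.inl ⟨rfl, rfl⟩))
        (hab ▸ ra1)
    · have hmem : a₁ ∈ G.bpred b \ {b} := by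
        rw [hpred]
        refine ⟨?_, hab⟩
        obtain ⟨e, hs, ht⟩ := hm1
        exact ⟨e, hs, ht⟩
      obtain ⟨⟨e, hs, ht⟩, -⟩ := hmem
      have hbsucc : b ∈ G.bsucc a₁ := ⟨e, hs, ht⟩
      exact ⟨a₁, w₂, ra1, rw2, hnest a₁ b ha1 hb hbsucc hm2⟩

end Mergable2

end TGraph
set_option linter.unusedSectionVars false

namespace TGraph

variable {V E : Type} {G : TGraph V E} {b b' : V}

theorem rel_eq_of_not_bang (hb : G.ty b = .bang) (hb' : G.ty b' = .bang)
    {x y : V} (h : mergeVRel b b' x y) (hy : G.ty y ≠ .bang) : x = y := by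
  rcases h with rfl | ⟨rfl, rfl⟩ | ⟨rfl, rfl⟩
  · rfl
  · exact absurd hb' hy
  · exact absurd hb hy

section MergePattern

variable (hp : G.IsPattern) (hb : G.ty b = .bang) (hb' : G.ty b' = .bang)
  (hpred : G.bpred b \ {b} = G.bpred b' \ {b'})
  (hdisj : G.bsucc b ∩ G.bsucc b' = ∅)

include hp hb hb' hpred hdisj

theorem merge_isPattern : (G.mergeGraph b b').IsPattern := by
  obtain ⟨⟨hnn, hg3⟩, ⟨-, hstr⟩, ⟨hsim, hrefl, hanti, htrans⟩, hopen, hnest⟩ := hp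
  have hp' : G.IsPattern :=
    ⟨⟨hnn, hg3⟩, ⟨hnn, hstr⟩, ⟨hsim, hrefl, hanti, htrans⟩, hopen, hnest⟩
  have hbb' : G.ty b = G.ty b' := hb.trans hb'.symm
  set M := G.mergeGraph b b' with hM
  have tymk : ∀ v : V, M.ty (Quot.mk _ v) = G.ty v := ty_mk' hbb'
  have hnsbb' : b' ∉ G.bsucc b := not_succ_bb' hp' hb hb' hdisj
  have hnsb'b : b ∉ G.bsucc b' := not_succ_b'b hp' hb hb' hdisj
  have tyS : ∀ e : E, M.ty (M.s (Quot.mk _ e)) = G.ty (G.s e) := fun e => by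
    rw [mergeGraph_s_mk, tymk]
  have tyT : ∀ e : E, M.ty (M.t (Quot.mk _ e)) = G.ty (G.t e) := fun e => by
    rw [mergeGraph_t_mk, tymk]
  refine ⟨⟨?_, ?_⟩, ⟨?_, ?_⟩, ⟨?_, ?_, ?_, ?_⟩, ?_, ?_⟩
  · -- NoNodeNode
    intro ε hε
    obtain ⟨e, rfl⟩ := Quot.exists_rep ε
    rw [tyS, tyT] at hε
    exact hnn e hε
  · -- G3
    intro ε hε
    obtain ⟨e, rfl⟩ := Quot.exists_rep ε
    rw [tyT] at hε
    rw [tyS]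
    exact hg3 e hε
  · intro ε hε
    obtain ⟨e, rfl⟩ := Quot.exists_rep ε
    rw [tyS, tyT] at hε
    exact hnn e hε
  · -- string graph property
    intro x hx
    obtain ⟨v, rfl⟩ := Quot.exists_rep x
    rw [tymk] at hx
    have hvnb : G.ty v ≠ .bang := by rw [hx]; simp
    constructor
    · intro ε₁ ε₂ h1 h2 ht1 ht2
      obtain ⟨e₁, rfl⟩ := Quot.exists_rep ε₁
      obtain ⟨e₂, rfl⟩ := Quot.exists_rep ε₂
      have hσ1 : e₁ ∈ G.sigmaEdges := ⟨by rw [← tyS]; exact h1.1, by rw [← tyT]; exact h1.2⟩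
      have hσ2 : e₂ ∈ G.sigmaEdges := ⟨by rw [← tyS]; exact h2.1, by rw [← tyT]; exact h2.2⟩
      rw [mergeGraph_t_mk] at ht1 ht2
      have hte1 := rel_eq_of_not_bang hb hb' (mergeVRel_mk_eq.1 ht1) hvnb
      have hte2 := rel_eq_of_not_bang hb hb' (mergeVRel_mk_eq.1 ht2) hvnb
      rw [(hstr v hx).1 e₁ e₂ hσ1 hσ2 hte1 hte2]
    · intro ε₁ ε₂ h1 h2 hs1 hs2
      obtain ⟨e₁, rfl⟩ := Quot.exists_rep ε₁
      obtain ⟨e₂, rfl⟩ := Quot.exists_rep ε₂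
      have hσ1 : e₁ ∈ G.sigmaEdges := ⟨by rw [← tyS]; exact h1.1, by rw [← tyT]; exact h1.2⟩
      have hσ2 : e₂ ∈ G.sigmaEdges := ⟨by rw [← tyS]; exact h2.1, by rw [← tyT]; exact h2.2⟩
      rw [mergeGraph_s_mk] at hs1 hs2
      have hse1 := rel_eq_of_not_bang hb hb' (mergeVRel_mk_eq.1 hs1) hvnb
      have hse2 := rel_eq_of_not_bang hb hb' (mergeVRel_mk_eq.1 hs2) hvnb
      rw [(hstr v hx).2 e₁ e₂ hσ1 hσ2 hse1 hse2]
  · -- beta simplicity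
    intro ε₁ ε₂ h1 h2 hs ht
    obtain ⟨e₁, rfl⟩ := Quot.exists_rep ε₁
    obtain ⟨e₂, rfl⟩ := Quot.exists_rep ε₂
    have hβ1 : e₁ ∈ G.betaEdges := ⟨by rw [← tyS]; exact h1.1, by rw [← tyT]; exact h1.2⟩
    have hβ2 : e₂ ∈ G.betaEdges := ⟨by rw [← tyS]; exact h2.1, by rw [← tyT]; exact h2.2⟩
    rw [mergeGraph_s_mk] at hs
    rw [mergeGraph_t_mk] at ht
    have hbpb : b ∈ G.bpred b := mem_bpred_self hrefl hb
    have hbpb' : b' ∈ G.bpred b' := mem_bpred_self hrefl hb'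
    rcases mergeVRel_mk_eq.1 hs with hseq | ⟨hs1, hs2⟩ | ⟨hs1, hs2⟩ <;>
      rcases mergeVRel_mk_eq.1 ht with hteq | ⟨ht1, ht2⟩ | ⟨ht1, ht2⟩
    · exact congrArg _ (hsim e₁ e₂ hβ1 hβ2 hseq hteq)
    · -- same source, targets (b, b')
      refine Quot.sound (Or.inr (Or.inl ⟨⟨?_, ?_⟩, ⟨?_, ?_⟩, hs, ht⟩))
      · exact ⟨e₁, rfl, ht1⟩
      · exact ht1 ▸ hbpb
      · exact ⟨e₂, rfl, ht2⟩
      · exact ht2 ▸ hbpb'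
    · refine Quot.sound (Or.inr (Or.inr ⟨⟨?_, ?_⟩, ⟨?_, ?_⟩, hs, ht⟩))
      · exact ⟨e₁, rfl, ht1⟩
      · exact ht1 ▸ hbpb'
      · exact ⟨e₂, rfl, ht2⟩
      · exact ht2 ▸ hbpb
    · -- sources (b, b'), same target
      exfalso
      have : G.t e₁ ∈ G.bsucc b ∩ G.bsucc b' :=
        ⟨⟨e₁, hs1, rfl⟩, hteq ▸ ⟨e₂, hs2, rfl⟩⟩
      rw [hdisj] at this
      exact this
    · -- e₁ : b → b, e₂ : b' → b'
      refine Quot.sound (Or.inr (Or.inl ⟨⟨?_, ?_⟩, ⟨?_, ?_⟩, hs, ht⟩))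
      · exact hs1 ▸ hbpb
      · exact ht1 ▸ hbpb
      · exact hs2 ▸ hbpb'
      · exact ht2 ▸ hbpb'
    · exact absurd (⟨e₁, hs1, ht1⟩ : b' ∈ G.bsucc b) hnsbb'
    · exfalso
      have : G.t e₁ ∈ G.bsucc b' ∩ G.bsucc b :=
        ⟨⟨e₁, hs1, rfl⟩, hteq ▸ ⟨e₂, hs2, rfl⟩⟩
      rw [Set.inter_comm, hdisj] at this
      exact this
    · exact absurd (⟨e₁, hs1, ht1⟩ : b ∈ G.bsucc b') hnsb'b
    · refine Quot.sound (Or.inr (Or.inr ⟨⟨?_, ?_⟩, ⟨?_, ?_⟩, hs, ht⟩))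
      · exact hs1 ▸ hbpb'
      · exact ht1 ▸ hbpb'
      · exact hs2 ▸ hbpb
      · exact ht2 ▸ hbpb
  · -- reflexivity
    intro x hx
    obtain ⟨v, rfl⟩ := Quot.exists_rep x
    rw [tymk] at hx
    exact mem_bsucc_mergeGraph.2 ⟨v, v, Or.inl rfl, Or.inl rfl, hrefl v hx⟩
  · -- antisymmetry
    intro x y hx hy h1 h2
    obtain ⟨v, rfl⟩ := Quot.exists_rep x
    obtain ⟨w, rfl⟩ := Quot.exists_rep y
    rw [tymk] at hx hy
    obtain ⟨v₁, w₁, rv1, rw1, hm1⟩ := mem_bsucc_mergeGraph.1 h1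
    obtain ⟨w₂, v₂, rw2, rv2, hm2⟩ := mem_bsucc_mergeGraph.1 h2
    have hv1 := bang_of_rel hb hb' rv1 hx
    have hv2 := bang_of_rel hb hb' rv2 hx
    have hw1 := bang_of_rel hb hb' rw1 hy
    have hw2 := bang_of_rel hb hb' rw2 hy
    have rvv : mergeVRel b b' v₁ v₂ :=
      (mergeVRel_equivalence b b').trans rv1 ((mergeVRel_equivalence b b').symm rv2)
    have rww : mergeVRel b b' w₁ w₂ :=
      (mergeVRel_equivalence b b').trans rw1 ((mergeVRel_equivalence b b').symm rw2)
    rcases rvv with hveq | ⟨hv1b, hv2b⟩ | ⟨hv1b, hv2b⟩ <;>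
      rcases rww with hweq | ⟨hw1b, hw2b⟩ | ⟨hw1b, hw2b⟩
    · have : v₁ = w₁ := hanti v₁ w₁ hv1 hw1 hm1 (hveq ▸ hweq ▸ hm2)
      rw [← mergeVRel_mk_eq.2 rv1, ← mergeVRel_mk_eq.2 rw1, this]
    · exfalso
      rw [hw1b] at hm1
      rw [hw2b, ← hveq] at hm2
      exact hnsb'b (hnest b' v₁ hb' hv1 hm2 hm1)
    · exfalso
      rw [hw1b] at hm1
      rw [hw2b, ← hveq] at hm2
      exact hnsbb' (hnest b v₁ hb hv1 hm2 hm1)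
    · exfalso
      rw [hv1b] at hm1
      rw [hv2b, ← hweq] at hm2
      exact hnsbb' (hnest b w₁ hb hw1 hm1 hm2)
    · rw [← mergeVRel_mk_eq.2 rv1, ← mergeVRel_mk_eq.2 rw1, hv1b, hw1b]
    · exfalso
      rw [hv1b] at hm1
      rw [hw1b] at hm1
      exact hnsbb' hm1
    · exfalso
      rw [hv1b] at hm1
      rw [hv2b, ← hweq] at hm2
      exact hnsb'b (hnest b' w₁ hb' hw1 hm1 hm2)
    · exfalso
      rw [hv1b, hw1b] at hm1
      exact hnsb'b hm1
    · rw [← mergeVRel_mk_eq.2 rv1, ← mergeVRel_mk_eq.2 rw1, hv1b, hw1b]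
  · -- transitivity
    intro x y z hx hy hz h1 h2
    obtain ⟨a, rfl⟩ := Quot.exists_rep x
    obtain ⟨v, rfl⟩ := Quot.exists_rep y
    obtain ⟨w, rfl⟩ := Quot.exists_rep z
    rw [tymk] at hx hy hz
    exact mem_bsucc_mergeGraph.2 (merge_succ_trans hp' hb hb' hpred hdisj hx hy
      (mem_bsucc_mergeGraph.1 h1) (mem_bsucc_mergeGraph.1 h2))
  · -- openness of boxes
    intro x hx
    obtain ⟨c, rfl⟩ := Quot.exists_rep x
    rw [tymk] at hx
    refine isOpen_fullSub _ _ (fun ε hs ht hw => ?_) (fun ε hs ht hw => ?_)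
    · obtain ⟨e, rfl⟩ := Quot.exists_rep ε
      rw [mergeGraph_t_mk, tymk] at hw
      rw [mergeGraph_s_mk] at hs
      rw [mergeGraph_t_mk] at ht
      rw [mergeGraph_s_mk, tymk]
      by_contra hns
      obtain ⟨c₁, s₁, rc1, rs1, hm⟩ := mem_bsucc_mergeGraph.1 hs
      have hseq : s₁ = G.s e := rel_eq_of_not_bang hb hb' rs1 hns
      have hc1 : G.ty c₁ = .bang := bang_of_rel hb hb' rc1 hx
      have htn : G.t e ∉ G.bsucc c₁ := fun hmem =>
        ht (mem_bsucc_mergeGraph.2 ⟨c₁, G.t e, rc1, Or.inl rfl, hmem⟩)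
      exact hns (in_box_bang hp' hc1 (hseq ▸ hm) htn hw)
    · obtain ⟨e, rfl⟩ := Quot.exists_rep ε
      rw [mergeGraph_s_mk, tymk] at hw
      rw [mergeGraph_s_mk] at hs
      rw [mergeGraph_t_mk] at ht
      obtain ⟨c₁, t₁, rc1, rt1, hm⟩ := mem_bsucc_mergeGraph.1 ht
      have hc1 : G.ty c₁ = .bang := bang_of_rel hb hb' rc1 hx
      rcases rt1 with hteq | ⟨ht1, ht2⟩ | ⟨ht1, ht2⟩
      · have hsn : G.s e ∉ G.bsucc c₁ := fun hmem =>
          hs (mem_bsucc_mergeGraph.2 ⟨c₁, G.s e, rc1, Or.inl rfl, hmem⟩)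
        exact out_box_false hp' hc1 hsn (hteq ▸ hm) hw
      · have := hg3 e (ht2 ▸ hb')
        rw [hw] at this; exact absurd this (by simp)
      · have := hg3 e (ht2 ▸ hb)
        rw [hw] at this; exact absurd this (by simp)
  · -- nesting
    intro x y hx hy h1 z hz
    obtain ⟨v, rfl⟩ := Quot.exists_rep x
    obtain ⟨w, rfl⟩ := Quot.exists_rep y
    obtain ⟨u, rfl⟩ := Quot.exists_rep z
    rw [tymk] at hx hy
    exact mem_bsucc_mergeGraph.2 (merge_succ_trans hp' hb hb' hpred hdisj hx hy
      (mem_bsucc_mergeGraph.1 h1) (mem_bsucc_mergeGraph.1 hz))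

end MergePattern

theorem merge_isInput_iff (hb : G.ty b = .bang) (hb' : G.ty b' = .bang) {v : V} :
    (G.mergeGraph b b').IsInput (Quot.mk _ v) ↔ G.IsInput v := by
  have hbb' : G.ty b = G.ty b' := hb.trans hb'.symm
  constructor
  · rintro ⟨hw, h⟩
    rw [ty_mk' hbb'] at hw
    refine ⟨hw, fun e hte => ?_⟩
    have := h (Quot.mk _ e) (by rw [mergeGraph_t_mk, hte])
    rwa [mergeGraph_s_mk, ty_mk' hbb'] at this
  · rintro ⟨hw, h⟩
    refine ⟨by rw [ty_mk' hbb']; exact hw, fun ε htε => ?_⟩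
    obtain ⟨e, rfl⟩ := Quot.exists_rep ε
    rw [mergeGraph_t_mk] at htε
    have hte := rel_eq_of_not_bang hb hb' (mergeVRel_mk_eq.1 htε)
      (by rw [hw]; simp)
    rw [mergeGraph_s_mk, ty_mk' hbb']
    exact h e hte

theorem merge_isOutput_iff (hb : G.ty b = .bang) (hb' : G.ty b' = .bang) {v : V} :
    (G.mergeGraph b b').IsOutput (Quot.mk _ v) ↔ G.IsOutput v := by
  have hbb' : G.ty b = G.ty b' := hb.trans hb'.symm
  constructor
  · rintro ⟨hw, h⟩
    rw [ty_mk' hbb'] at hw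
    refine ⟨hw, fun e hse => h (Quot.mk _ e) (by rw [mergeGraph_s_mk, hse])⟩
  · rintro ⟨hw, h⟩
    refine ⟨by rw [ty_mk' hbb']; exact hw, fun ε hsε => ?_⟩
    obtain ⟨e, rfl⟩ := Quot.exists_rep ε
    rw [mergeGraph_s_mk] at hsε
    exact h e (rel_eq_of_not_bang hb hb' (mergeVRel_mk_eq.1 hsε)
      (by rw [hw]; simp))

end TGraph
set_option linter.unusedSectionVars false

namespace TGraph

section DropKill

variable {VI EI VL EL : Type} {I : TGraph VI EI} {L : TGraph VL EL}
  (f : GHom I L) {b : VI}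

theorem drop_bound_bij (hb : I.ty b = .bang) (hne : ∀ v, v ≠ b → f.fv v ≠ f.fv b)
    (hLg3 : ∀ e, L.ty (L.t e) = .bang → L.ty (L.s e) = .bang)
    (hbb : Set.BijOn f.fv {v | I.ty v = .wire} {v | L.IsInput v ∨ L.IsOutput v}) :
    Set.BijOn (dropHom f b hne).fv {v | (I.dropGraph b).ty v = .wire}
      {v | (L.dropGraph (f.fv b)).IsInput v ∨ (L.dropGraph (f.fv b)).IsOutput v} := by
  have hbL : L.ty (f.fv b) = .bang := by rw [f.map_ty]; exact hb
  refine ⟨fun v hv => ?_, fun v hv w hw hvw => ?_, fun u hu => ?_⟩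
  · rcases hbb.mapsTo (hv : I.ty v.1 = .wire) with h | h
    · exact Or.inl ((drop_isInput_iff hbL).2 h)
    · exact Or.inr ((drop_isOutput_iff hLg3 hbL).2 h)
  · exact Subtype.ext (hbb.injOn hv hw (congrArg Subtype.val hvw))
  · have hmem : L.IsInput u.1 ∨ L.IsOutput u.1 := by
      rcases hu with h | h
      · exact Or.inl ((drop_isInput_iff hbL).1 h)
      · exact Or.inr ((drop_isOutput_iff hLg3 hbL).1 h)
    obtain ⟨v, hv, hfv⟩ := hbb.surjOn hmem
    refine ⟨⟨v, fun hvb => ?_⟩, hv, Subtype.ext hfv⟩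
    rw [hvb] at hv
    exact absurd ((hv : I.ty b = VTy.wire).symm.trans hb) (by simp)

theorem drop_beta_bijV (hb : I.ty b = .bang) (hne : ∀ v, v ≠ b → f.fv v ≠ f.fv b)
    (hbij : Set.BijOn f.fv {v | I.ty v = .bang} {v | L.ty v = .bang}) :
    Set.BijOn (dropHom f b hne).fv {v | (I.dropGraph b).ty v = .bang}
      {v | (L.dropGraph (f.fv b)).ty v = .bang} := by
  refine ⟨fun v hv => ?_, fun v hv w hw hvw => ?_, fun u hu => ?_⟩
  · exact hbij.mapsTo (hv : I.ty v.1 = .bang)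
  · exact Subtype.ext (hbij.injOn hv hw (congrArg Subtype.val hvw))
  · obtain ⟨v, hv, hfv⟩ := hbij.surjOn (hu : L.ty u.1 = .bang)
    exact ⟨⟨v, fun hvb => u.2 (by rw [← hfv, hvb])⟩, hv, Subtype.ext hfv⟩

theorem drop_beta_bijE (hb : I.ty b = .bang) (hne : ∀ v, v ≠ b → f.fv v ≠ f.fv b)
    (hbij : Set.BijOn f.fe I.betaEdges L.betaEdges) :
    Set.BijOn (dropHom f b hne).fe (I.dropGraph b).betaEdges
      (L.dropGraph (f.fv b)).betaEdges := by
  refine ⟨fun e he => ?_, fun e he e' he' hee => ?_, fun u hu => ?_⟩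
  · have : f.fe e.1 ∈ L.betaEdges := by
      refine ⟨?_, ?_⟩
      · rw [f.map_s, f.map_ty]; exact he.1
      · rw [f.map_t, f.map_ty]; exact he.2
    exact this
  · exact Subtype.ext (hbij.injOn he he' (congrArg Subtype.val hee))
  · obtain ⟨e, he, hfe⟩ := hbij.surjOn (hu : u.1 ∈ L.betaEdges)
    have hs : I.s e ≠ b := fun hc => u.2.1 (by rw [← hfe, f.map_s, hc])
    have ht : I.t e ≠ b := fun hc => u.2.2 (by rw [← hfe, f.map_t, hc])
    exact ⟨⟨e, hs, ht⟩, he, Subtype.ext hfe⟩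

theorem drop_box (hb : I.ty b = .bang) (hne : ∀ v, v ≠ b → f.fv v ≠ f.fv b)
    (hbox : ∀ c, I.ty c = .bang → f.fv ⁻¹' (L.bsucc (f.fv c)) = I.bsucc c) :
    ∀ c, (I.dropGraph b).ty c = .bang →
      (dropHom f b hne).fv ⁻¹' ((L.dropGraph (f.fv b)).bsucc ((dropHom f b hne).fv c)) =
        (I.dropGraph b).bsucc c := by
  intro c hc
  ext v
  constructor
  · intro h
    exact mem_bsucc_restrict.2
      (mem_of_preimage_eq f.fv (hbox c.1 hc) (mem_bsucc_restrict.1 h))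
  · intro h
    exact mem_bsucc_restrict.2 (f.mem_bsucc (mem_bsucc_restrict.1 h))

theorem kill_bound_bij (hpL : L.IsPattern) (hb : I.ty b = .bang)
    (hbox : f.fv ⁻¹' (L.bsucc (f.fv b)) = I.bsucc b)
    (hbb : Set.BijOn f.fv {v | I.ty v = .wire} {v | L.IsInput v ∨ L.IsOutput v}) :
    Set.BijOn (killHom f b hbox).fv {v | (I.killGraph b).ty v = .wire}
      {v | (L.killGraph (f.fv b)).IsInput v ∨ (L.killGraph (f.fv b)).IsOutput v} := by
  have hbL : L.ty (f.fv b) = .bang := by rw [f.map_ty]; exact hb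
  refine ⟨fun v hv => ?_, fun v hv w hw hvw => ?_, fun u hu => ?_⟩
  · rcases hbb.mapsTo (hv : I.ty v.1 = .wire) with h | h
    · exact Or.inl ((kill_isInput_iff hpL hbL).2 h)
    · exact Or.inr ((kill_isOutput_iff hpL hbL).2 h)
  · exact Subtype.ext (hbb.injOn hv hw (congrArg Subtype.val hvw))
  · have hmem : L.IsInput u.1 ∨ L.IsOutput u.1 := by
      rcases hu with h | h
      · exact Or.inl ((kill_isInput_iff hpL hbL).1 h)
      · exact Or.inr ((kill_isOutput_iff hpL hbL).1 h)
    obtain ⟨v, hv, hfv⟩ := hbb.surjOn hmem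
    refine ⟨⟨v, fun hvb => u.2 ?_⟩, hv, Subtype.ext hfv⟩
    rw [← hfv]
    exact f.mem_bsucc hvb

theorem kill_beta_bijV (hpL : L.IsPattern) (hb : I.ty b = .bang)
    (hbox : f.fv ⁻¹' (L.bsucc (f.fv b)) = I.bsucc b)
    (hbij : Set.BijOn f.fv {v | I.ty v = .bang} {v | L.ty v = .bang}) :
    Set.BijOn (killHom f b hbox).fv {v | (I.killGraph b).ty v = .bang}
      {v | (L.killGraph (f.fv b)).ty v = .bang} := by
  refine ⟨fun v hv => ?_, fun v hv w hw hvw => ?_, fun u hu => ?_⟩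
  · exact hbij.mapsTo (hv : I.ty v.1 = .bang)
  · exact Subtype.ext (hbij.injOn hv hw (congrArg Subtype.val hvw))
  · obtain ⟨v, hv, hfv⟩ := hbij.surjOn (hu : L.ty u.1 = .bang)
    refine ⟨⟨v, fun hvb => u.2 ?_⟩, hv, Subtype.ext hfv⟩
    rw [← hfv]
    exact f.mem_bsucc hvb

theorem kill_beta_bijE (hb : I.ty b = .bang)
    (hbox : f.fv ⁻¹' (L.bsucc (f.fv b)) = I.bsucc b)
    (hbij : Set.BijOn f.fe I.betaEdges L.betaEdges) :
    Set.BijOn (killHom f b hbox).fe (I.killGraph b).betaEdges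
      (L.killGraph (f.fv b)).betaEdges := by
  refine ⟨fun e he => ?_, fun e he e' he' hee => ?_, fun u hu => ?_⟩
  · have : f.fe e.1 ∈ L.betaEdges := by
      refine ⟨?_, ?_⟩
      · rw [f.map_s, f.map_ty]; exact he.1
      · rw [f.map_t, f.map_ty]; exact he.2
    exact this
  · exact Subtype.ext (hbij.injOn he he' (congrArg Subtype.val hee))
  · obtain ⟨e, he, hfe⟩ := hbij.surjOn (hu : u.1 ∈ L.betaEdges)
    have hs : I.s e ∉ I.bsucc b := fun hc =>
      u.2.1 (by rw [← hfe, f.map_s]; exact f.mem_bsucc hc)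
    have ht : I.t e ∉ I.bsucc b := fun hc =>
      u.2.2 (by rw [← hfe, f.map_t]; exact f.mem_bsucc hc)
    exact ⟨⟨e, hs, ht⟩, he, Subtype.ext hfe⟩

theorem kill_box (hb : I.ty b = .bang)
    (hbox0 : f.fv ⁻¹' (L.bsucc (f.fv b)) = I.bsucc b)
    (hbox : ∀ c, I.ty c = .bang → f.fv ⁻¹' (L.bsucc (f.fv c)) = I.bsucc c) :
    ∀ c, (I.killGraph b).ty c = .bang →
      (killHom f b hbox0).fv ⁻¹'
          ((L.killGraph (f.fv b)).bsucc ((killHom f b hbox0).fv c)) =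
        (I.killGraph b).bsucc c := by
  intro c hc
  ext v
  constructor
  · intro h
    exact mem_bsucc_restrict.2
      (mem_of_preimage_eq f.fv (hbox c.1 hc) (mem_bsucc_restrict.1 h))
  · intro h
    exact mem_bsucc_restrict.2 (f.mem_bsucc (mem_bsucc_restrict.1 h))

end DropKill

end TGraph
set_option linter.unusedSectionVars false

namespace TGraph

variable {VL EL VI EI VR ER : Type}
  {L : TGraph VL EL} {I : TGraph VI EI} {R : TGraph VR ER}
  {i₁ : GHom I L} {i₂ : GHom I R}

theorem drop_rewrite (h : IsRewritePattern L I R i₁ i₂) (b : VI)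
    (hb : I.ty b = .bang) :
    IsRewritePattern (L.dropGraph (i₁.fv b)) (I.dropGraph b)
      (R.dropGraph (i₂.fv b))
      (dropHom i₁ b (h.ne₁ hb)) (dropHom i₂ b (h.ne₂ hb)) := by
  have hbL : L.ty (i₁.fv b) = .bang := by rw [i₁.map_ty]; exact hb
  have hbR : R.ty (i₂.fv b) = .bang := by rw [i₂.map_ty]; exact hb
  refine ⟨restrict_isPattern h.patL _, restrict_isPattern h.patI _,
    restrict_isPattern h.patR _, fun v => h.no_node v.1,
    fun e he => h.no_sigma_edges e.1 he,
    drop_bound_bij i₁ hb (h.ne₁ hb) h.patL.1.2 h.bound_bij₁,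
    drop_bound_bij i₂ hb (h.ne₂ hb) h.patR.1.2 h.bound_bij₂,
    fun v hv => ?_,
    drop_beta_bijV i₁ hb (h.ne₁ hb) h.beta_bijV₁,
    drop_beta_bijE i₁ hb (h.ne₁ hb) h.beta_bijE₁,
    drop_beta_bijV i₂ hb (h.ne₂ hb) h.beta_bijV₂,
    drop_beta_bijE i₂ hb (h.ne₂ hb) h.beta_bijE₂,
    drop_box i₁ hb (h.ne₁ hb) h.box₁,
    drop_box i₂ hb (h.ne₂ hb) h.box₂⟩
  have hio := h.inout v.1 hv
  constructor
  · rw [drop_isInput_iff hbL, drop_isInput_iff hbR]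
    exact hio.1
  · rw [drop_isOutput_iff h.patL.1.2 hbL, drop_isOutput_iff h.patR.1.2 hbR]
    exact hio.2

theorem kill_rewrite (h : IsRewritePattern L I R i₁ i₂) (b : VI)
    (hb : I.ty b = .bang) :
    IsRewritePattern (L.killGraph (i₁.fv b)) (I.killGraph b)
      (R.killGraph (i₂.fv b))
      (killHom i₁ b (h.box₁ b hb)) (killHom i₂ b (h.box₂ b hb)) := by
  have hbL : L.ty (i₁.fv b) = .bang := by rw [i₁.map_ty]; exact hb
  have hbR : R.ty (i₂.fv b) = .bang := by rw [i₂.map_ty]; exact hb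
  refine ⟨restrict_isPattern h.patL _, restrict_isPattern h.patI _,
    restrict_isPattern h.patR _, fun v => h.no_node v.1,
    fun e he => h.no_sigma_edges e.1 he,
    kill_bound_bij i₁ h.patL hb (h.box₁ b hb) h.bound_bij₁,
    kill_bound_bij i₂ h.patR hb (h.box₂ b hb) h.bound_bij₂,
    fun v hv => ?_,
    kill_beta_bijV i₁ h.patL hb (h.box₁ b hb) h.beta_bijV₁,
    kill_beta_bijE i₁ hb (h.box₁ b hb) h.beta_bijE₁,
    kill_beta_bijV i₂ h.patR hb (h.box₂ b hb) h.beta_bijV₂,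
    kill_beta_bijE i₂ hb (h.box₂ b hb) h.beta_bijE₂,
    kill_box i₁ hb (h.box₁ b hb) h.box₁,
    kill_box i₂ hb (h.box₂ b hb) h.box₂⟩
  have hio := h.inout v.1 hv
  constructor
  · rw [kill_isInput_iff h.patL hbL, kill_isInput_iff h.patR hbR]
    exact hio.1
  · rw [kill_isOutput_iff h.patL hbL, kill_isOutput_iff h.patR hbR]
    exact hio.2

end TGraph
set_option linter.unusedSectionVars false

namespace TGraph

section CopySpan

variable {VI EI VL EL : Type} {I : TGraph VI EI} {L : TGraph VL EL}
  (f : GHom I L) {b : VI}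

theorem copy_bound_bij (hb : I.ty b = .bang)
    (hbox : f.fv ⁻¹' (L.bsucc (f.fv b)) = I.bsucc b)
    (hbb : Set.BijOn f.fv {v | I.ty v = .wire} {v | L.IsInput v ∨ L.IsOutput v}) :
    Set.BijOn (copyHom f b hbox).fv {x | (I.copyGraph b).ty x = .wire}
      {x | (L.copyGraph (f.fv b)).IsInput x ∨ (L.copyGraph (f.fv b)).IsOutput x} := by
  refine ⟨fun x hx => ?_, fun x hx y hy hxy => ?_, fun y hy => ?_⟩
  · match x with
    | Sum.inl v =>
      rcases hbb.mapsTo (hx : I.ty v = .wire) with hio | hio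
      · exact Or.inl (copy_isInput_inl.2 hio)
      · exact Or.inr (copy_isOutput_inl.2 hio)
    | Sum.inr w =>
      rcases hbb.mapsTo (hx : I.ty w.1 = .wire) with hio | hio
      · exact Or.inl (copy_isInput_inr.2 hio)
      · exact Or.inr (copy_isOutput_inr.2 hio)
  · match x, y with
    | Sum.inl v, Sum.inl w =>
      exact congrArg _ (hbb.injOn hx hy (Sum.inl.inj hxy))
    | Sum.inl v, Sum.inr w => exact absurd hxy (by simp [copyHom])
    | Sum.inr v, Sum.inl w => exact absurd hxy (by simp [copyHom])
    | Sum.inr v, Sum.inr w =>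
      exact congrArg _ (Subtype.ext (hbb.injOn hx hy
        (congrArg Subtype.val (Sum.inr.inj hxy))))
  · match y with
    | Sum.inl u =>
      have hmem : L.IsInput u ∨ L.IsOutput u := by
        rcases hy with hio | hio
        · exact Or.inl (copy_isInput_inl.1 hio)
        · exact Or.inr (copy_isOutput_inl.1 hio)
      obtain ⟨v, hv, hfv⟩ := hbb.surjOn hmem
      exact ⟨Sum.inl v, hv, congrArg _ hfv⟩
    | Sum.inr u =>
      have hmem : L.IsInput u.1 ∨ L.IsOutput u.1 := by
        rcases hy with hio | hio
        · exact Or.inl (copy_isInput_inr.1 hio)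
        · exact Or.inr (copy_isOutput_inr.1 hio)
      obtain ⟨v, hv, hfv⟩ := hbb.surjOn hmem
      have hvB : v ∈ I.bsucc b :=
        mem_of_preimage_eq f.fv hbox (by rw [hfv]; exact u.2)
      exact ⟨Sum.inr ⟨v, hvB⟩, hv,
        show Sum.inr _ = Sum.inr _ from congrArg _ (Subtype.ext hfv)⟩

theorem copy_beta_bijV (hb : I.ty b = .bang)
    (hbox : f.fv ⁻¹' (L.bsucc (f.fv b)) = I.bsucc b)
    (hbij : Set.BijOn f.fv {v | I.ty v = .bang} {v | L.ty v = .bang}) :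
    Set.BijOn (copyHom f b hbox).fv {x | (I.copyGraph b).ty x = .bang}
      {x | (L.copyGraph (f.fv b)).ty x = .bang} := by
  refine ⟨fun x hx => ?_, fun x hx y hy hxy => ?_, fun y hy => ?_⟩
  · match x with
    | Sum.inl v => exact hbij.mapsTo (hx : I.ty v = .bang)
    | Sum.inr w => exact hbij.mapsTo (hx : I.ty w.1 = .bang)
  · match x, y with
    | Sum.inl v, Sum.inl w =>
      exact congrArg _ (hbij.injOn hx hy (Sum.inl.inj hxy))
    | Sum.inl v, Sum.inr w => exact absurd hxy (by simp [copyHom])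
    | Sum.inr v, Sum.inl w => exact absurd hxy (by simp [copyHom])
    | Sum.inr v, Sum.inr w =>
      exact congrArg _ (Subtype.ext (hbij.injOn hx hy
        (congrArg Subtype.val (Sum.inr.inj hxy))))
  · match y with
    | Sum.inl u =>
      obtain ⟨v, hv, hfv⟩ := hbij.surjOn (hy : L.ty u = .bang)
      exact ⟨Sum.inl v, hv, congrArg _ hfv⟩
    | Sum.inr u =>
      obtain ⟨v, hv, hfv⟩ := hbij.surjOn (hy : L.ty u.1 = .bang)
      have hvB : v ∈ I.bsucc b :=
        mem_of_preimage_eq f.fv hbox (by rw [hfv]; exact u.2)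
      exact ⟨Sum.inr ⟨v, hvB⟩, hv,
        show Sum.inr _ = Sum.inr _ from congrArg _ (Subtype.ext hfv)⟩

theorem copy_betaEdges_inl {e : EI} :
    Sum.inl e ∈ (I.copyGraph b).betaEdges ↔ e ∈ I.betaEdges := Iff.rfl

theorem copy_betaEdges_inr {e : {e : EI // I.s e ∈ I.bsucc b ∨ I.t e ∈ I.bsucc b}} :
    Sum.inr e ∈ (I.copyGraph b).betaEdges ↔ e.1 ∈ I.betaEdges := by
  constructor
  · rintro ⟨h1, h2⟩
    rw [show (I.copyGraph b).s (Sum.inr e) = I.embed b (I.s e.1) from rfl,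
      ty_embed] at h1
    rw [show (I.copyGraph b).t (Sum.inr e) = I.embed b (I.t e.1) from rfl,
      ty_embed] at h2
    exact ⟨h1, h2⟩
  · rintro ⟨h1, h2⟩
    refine ⟨?_, ?_⟩
    · rw [show (I.copyGraph b).s (Sum.inr e) = I.embed b (I.s e.1) from rfl,
        ty_embed]
      exact h1
    · rw [show (I.copyGraph b).t (Sum.inr e) = I.embed b (I.t e.1) from rfl,
        ty_embed]
      exact h2

theorem fe_beta (hbijE : Set.BijOn f.fe I.betaEdges L.betaEdges) {e : EI}
    (he : e ∈ I.betaEdges) : f.fe e ∈ L.betaEdges := hbijE.mapsTo he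

theorem copy_beta_bijE (hb : I.ty b = .bang)
    (hbox : f.fv ⁻¹' (L.bsucc (f.fv b)) = I.bsucc b)
    (hbijE : Set.BijOn f.fe I.betaEdges L.betaEdges) :
    Set.BijOn (copyHom f b hbox).fe (I.copyGraph b).betaEdges
      (L.copyGraph (f.fv b)).betaEdges := by
  refine ⟨fun x hx => ?_, fun x hx y hy hxy => ?_, fun y hy => ?_⟩
  · match x with
    | Sum.inl e => exact copy_betaEdges_inl.2 (hbijE.mapsTo (copy_betaEdges_inl.1 hx))
    | Sum.inr e => exact copy_betaEdges_inr.2 (hbijE.mapsTo (copy_betaEdges_inr.1 hx))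
  · match x, y with
    | Sum.inl e, Sum.inl e' =>
      exact congrArg _ (hbijE.injOn (copy_betaEdges_inl.1 hx)
        (copy_betaEdges_inl.1 hy) (Sum.inl.inj hxy))
    | Sum.inl e, Sum.inr e' => exact absurd hxy (by simp [copyHom])
    | Sum.inr e, Sum.inl e' => exact absurd hxy (by simp [copyHom])
    | Sum.inr e, Sum.inr e' =>
      exact congrArg _ (Subtype.ext (hbijE.injOn (copy_betaEdges_inr.1 hx)
        (copy_betaEdges_inr.1 hy) (congrArg Subtype.val (Sum.inr.inj hxy))))
  · match y with
    | Sum.inl u =>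
      obtain ⟨e, he, hfe⟩ := hbijE.surjOn (copy_betaEdges_inl.1 hy)
      exact ⟨Sum.inl e, copy_betaEdges_inl.2 he, congrArg _ hfe⟩
    | Sum.inr u =>
      obtain ⟨e, he, hfe⟩ := hbijE.surjOn (copy_betaEdges_inr.1 hy)
      have htouch : I.s e ∈ I.bsucc b ∨ I.t e ∈ I.bsucc b := by
        rcases u.2 with hu | hu
        · refine Or.inl (mem_of_preimage_eq f.fv hbox ?_)
          rw [← f.map_s, hfe]; exact hu
        · refine Or.inr (mem_of_preimage_eq f.fv hbox ?_)
          rw [← f.map_t, hfe]; exact hu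
      refine ⟨Sum.inr ⟨e, htouch⟩, copy_betaEdges_inr.2 he,
        show Sum.inr _ = Sum.inr _ from congrArg _ (Subtype.ext hfe)⟩

theorem copy_box (hb : I.ty b = .bang)
    (hbox0 : f.fv ⁻¹' (L.bsucc (f.fv b)) = I.bsucc b)
    (hbox : ∀ c, I.ty c = .bang → f.fv ⁻¹' (L.bsucc (f.fv c)) = I.bsucc c) :
    ∀ x, (I.copyGraph b).ty x = .bang →
      (copyHom f b hbox0).fv ⁻¹'
          ((L.copyGraph (f.fv b)).bsucc ((copyHom f b hbox0).fv x)) =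
        (I.copyGraph b).bsucc x := by
  have htr : ∀ c v, I.ty c = .bang → (f.fv v ∈ L.bsucc (f.fv c) ↔ v ∈ I.bsucc c) :=
    fun c v hc => ⟨fun hm => mem_of_preimage_eq f.fv (hbox c hc) hm,
      fun hm => f.mem_bsucc hm⟩
  intro x hx
  ext y
  match x, y with
  | Sum.inl c, Sum.inl v =>
    constructor
    · intro hm
      exact bsucc_copy_inl_inl.2 ((htr c v hx).1 (bsucc_copy_inl_inl.1 hm))
    · intro hm
      exact bsucc_copy_inl_inl.2 ((htr c v hx).2 (bsucc_copy_inl_inl.1 hm))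
  | Sum.inl c, Sum.inr v =>
    constructor
    · intro hm
      obtain ⟨h1, h2⟩ := bsucc_copy_inl_inr.1 hm
      exact bsucc_copy_inl_inr.2 ⟨fun hc => h1 ((htr b c hb).2 hc),
        (htr c v.1 hx).1 h2⟩
    · intro hm
      obtain ⟨h1, h2⟩ := bsucc_copy_inl_inr.1 hm
      exact bsucc_copy_inl_inr.2 ⟨fun hc => h1 ((htr b c hb).1 hc),
        (htr c v.1 hx).2 h2⟩
  | Sum.inr c, Sum.inl v =>
    constructor
    · intro hm
      obtain ⟨h1, h2⟩ := bsucc_copy_inr_inl.1 hm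
      exact bsucc_copy_inr_inl.2 ⟨fun hc => h1 ((htr b v hb).2 hc),
        (htr c.1 v hx).1 h2⟩
    · intro hm
      obtain ⟨h1, h2⟩ := bsucc_copy_inr_inl.1 hm
      exact bsucc_copy_inr_inl.2 ⟨fun hc => h1 ((htr b v hb).1 hc),
        (htr c.1 v hx).2 h2⟩
  | Sum.inr c, Sum.inr v =>
    constructor
    · intro hm
      exact bsucc_copy_inr_inr.2 ((htr c.1 v.1 hx).1 (bsucc_copy_inr_inr.1 hm))
    · intro hm
      exact bsucc_copy_inr_inr.2 ((htr c.1 v.1 hx).2 (bsucc_copy_inr_inr.1 hm))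

end CopySpan

variable {VL EL VI EI VR ER : Type}
  {L : TGraph VL EL} {I : TGraph VI EI} {R : TGraph VR ER}
  {i₁ : GHom I L} {i₂ : GHom I R}

theorem copy_rewrite (h : IsRewritePattern L I R i₁ i₂) (b : VI)
    (hb : I.ty b = .bang) :
    IsRewritePattern (L.copyGraph (i₁.fv b)) (I.copyGraph b)
      (R.copyGraph (i₂.fv b))
      (copyHom i₁ b (h.box₁ b hb)) (copyHom i₂ b (h.box₂ b hb)) := by
  have hbL : L.ty (i₁.fv b) = .bang := by rw [i₁.map_ty]; exact hb
  have hbR : R.ty (i₂.fv b) = .bang := by rw [i₂.map_ty]; exact hb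
  refine ⟨copy_isPattern h.patL hbL, copy_isPattern h.patI hb,
    copy_isPattern h.patR hbR, fun x => ?_, fun ε hε => ?_,
    copy_bound_bij i₁ hb (h.box₁ b hb) h.bound_bij₁,
    copy_bound_bij i₂ hb (h.box₂ b hb) h.bound_bij₂,
    fun x hx => ?_,
    copy_beta_bijV i₁ hb (h.box₁ b hb) h.beta_bijV₁,
    copy_beta_bijE i₁ hb (h.box₁ b hb) h.beta_bijE₁,
    copy_beta_bijV i₂ hb (h.box₂ b hb) h.beta_bijV₂,
    copy_beta_bijE i₂ hb (h.box₂ b hb) h.beta_bijE₂,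
    copy_box i₁ hb (h.box₁ b hb) h.box₁,
    copy_box i₂ hb (h.box₂ b hb) h.box₂⟩
  · match x with
    | Sum.inl v => exact h.no_node v
    | Sum.inr v => exact h.no_node v.1
  · match ε with
    | Sum.inl e => exact h.no_sigma_edges e hε
    | Sum.inr e =>
      refine h.no_sigma_edges e.1 ⟨?_, ?_⟩
      · have := hε.1
        rwa [show (I.copyGraph b).s (Sum.inr e) = I.embed b (I.s e.1) from rfl,
          ty_embed] at this
      · have := hε.2
        rwa [show (I.copyGraph b).t (Sum.inr e) = I.embed b (I.t e.1) from rfl,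
          ty_embed] at this
  · match x with
    | Sum.inl v =>
      have hio := h.inout v hx
      exact ⟨⟨fun hin => copy_isInput_inl.2 (hio.1.1 (copy_isInput_inl.1 hin)),
          fun hin => copy_isInput_inl.2 (hio.1.2 (copy_isInput_inl.1 hin))⟩,
        ⟨fun hout => copy_isOutput_inl.2 (hio.2.1 (copy_isOutput_inl.1 hout)),
          fun hout => copy_isOutput_inl.2 (hio.2.2 (copy_isOutput_inl.1 hout))⟩⟩
    | Sum.inr v =>
      have hio := h.inout v.1 hx
      exact ⟨⟨fun hin => copy_isInput_inr.2 (hio.1.1 (copy_isInput_inr.1 hin)),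
          fun hin => copy_isInput_inr.2 (hio.1.2 (copy_isInput_inr.1 hin))⟩,
        ⟨fun hout => copy_isOutput_inr.2 (hio.2.1 (copy_isOutput_inr.1 hout)),
          fun hout => copy_isOutput_inr.2 (hio.2.2 (copy_isOutput_inr.1 hout))⟩⟩

end TGraph
set_option linter.unusedSectionVars false

namespace TGraph

section MergeSpan

variable {VI EI VL EL : Type} {I : TGraph VI EI} {L : TGraph VL EL}
  (f : GHom I L) {b b' : VI}

theorem rel_map {x y : VI} (h : mergeVRel b b' x y) :
    mergeVRel (f.fv b) (f.fv b') (f.fv x) (f.fv y) := by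
  rcases h with rfl | ⟨rfl, rfl⟩ | ⟨rfl, rfl⟩
  · exact Or.inl rfl
  · exact Or.inr (Or.inl ⟨rfl, rfl⟩)
  · exact Or.inr (Or.inr ⟨rfl, rfl⟩)

theorem bpred_reflect (hLg3 : ∀ e, L.ty (L.t e) = .bang → L.ty (L.s e) = .bang)
    (hbijV : Set.BijOn f.fv {v | I.ty v = .bang} {v | L.ty v = .bang})
    (hbijE : Set.BijOn f.fe I.betaEdges L.betaEdges)
    {c v : VI} (hcI : I.ty c = .bang) (h : f.fv v ∈ L.bpred (f.fv c)) :
    v ∈ I.bpred c := by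
  obtain ⟨u, hsu, htu⟩ := h
  have hcb : L.ty (f.fv c) = .bang := by rw [f.map_ty]; exact hcI
  have hub : u ∈ L.betaEdges :=
    ⟨hLg3 u (by rw [htu]; exact hcb), by rw [htu]; exact hcb⟩
  obtain ⟨e, he, hfe⟩ := hbijE.surjOn hub
  have hvb : I.ty v = .bang := by
    have : L.ty (f.fv v) = .bang := by rw [← hsu]; exact hub.1
    rwa [f.map_ty] at this
  have hse : I.s e = v := by
    refine hbijV.injOn he.1 hvb ?_
    rw [← f.map_s, hfe, hsu]
  have hte : I.t e = c := by
    refine hbijV.injOn he.2 hcI ?_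
    rw [← f.map_t, hfe, htu]
  exact ⟨e, hse, hte⟩

theorem merge_bound_bij (hb : I.ty b = .bang) (hb' : I.ty b' = .bang)
    (hinj' : ∀ v, f.fv v = f.fv b' → v = b')
    (hbb : Set.BijOn f.fv {v | I.ty v = .wire} {v | L.IsInput v ∨ L.IsOutput v}) :
    Set.BijOn (mergeHom f b b' hinj').fv
      {x | (I.mergeGraph b b').ty x = .wire}
      {x | (L.mergeGraph (f.fv b) (f.fv b')).IsInput x ∨
        (L.mergeGraph (f.fv b) (f.fv b')).IsOutput x} := by
  have hbbI : I.ty b = I.ty b' := hb.trans hb'.symm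
  have hbL : L.ty (f.fv b) = .bang := by rw [f.map_ty]; exact hb
  have hbL' : L.ty (f.fv b') = .bang := by rw [f.map_ty]; exact hb'
  have hbbL : L.ty (f.fv b) = L.ty (f.fv b') := hbL.trans hbL'.symm
  refine ⟨fun x hx => ?_, fun x hx y hy hxy => ?_, fun y hy => ?_⟩
  · obtain ⟨v, rfl⟩ := Quot.exists_rep x
    have hv : I.ty v = .wire := by
      have h2 : (I.mergeGraph b b').ty (Quot.mk _ v) = .wire := hx
      rwa [ty_mk' hbbI] at h2
    rcases hbb.mapsTo hv with hio | hio
    · exact Or.inl ((merge_isInput_iff hbL hbL').2 hio)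
    · exact Or.inr ((merge_isOutput_iff hbL hbL').2 hio)
  · obtain ⟨v, rfl⟩ := Quot.exists_rep x
    obtain ⟨w, rfl⟩ := Quot.exists_rep y
    have hv : I.ty v = .wire := by
      have h2 : (I.mergeGraph b b').ty (Quot.mk _ v) = .wire := hx
      rwa [ty_mk' hbbI] at h2
    have hw : I.ty w = .wire := by
      have h2 : (I.mergeGraph b b').ty (Quot.mk _ w) = .wire := hy
      rwa [ty_mk' hbbI] at h2
    have hfeq : f.fv v = f.fv w := by
      refine rel_eq_of_not_bang hbL hbL' (mergeVRel_mk_eq.1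
        (hxy : Quot.mk _ (f.fv v) = Quot.mk _ (f.fv w))) ?_
      rw [f.map_ty, hw]; simp
    exact congrArg _ (hbb.injOn hv hw hfeq)
  · obtain ⟨u, rfl⟩ := Quot.exists_rep y
    have hmem : L.IsInput u ∨ L.IsOutput u := by
      rcases hy with hio | hio
      · exact Or.inl ((merge_isInput_iff hbL hbL').1 hio)
      · exact Or.inr ((merge_isOutput_iff hbL hbL').1 hio)
    obtain ⟨v, hv, hfv⟩ := hbb.surjOn hmem
    refine ⟨Quot.mk _ v, ?_, ?_⟩
    · show (I.mergeGraph b b').ty (Quot.mk _ v) = .wire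
      rw [ty_mk' hbbI]; exact hv
    · show Quot.mk _ (f.fv v) = Quot.mk _ u
      rw [hfv]

theorem merge_beta_bijV (hb : I.ty b = .bang) (hb' : I.ty b' = .bang)
    (hinj' : ∀ v, f.fv v = f.fv b' → v = b')
    (hinjb : ∀ v, f.fv v = f.fv b → v = b)
    (hbijV : Set.BijOn f.fv {v | I.ty v = .bang} {v | L.ty v = .bang}) :
    Set.BijOn (mergeHom f b b' hinj').fv
      {x | (I.mergeGraph b b').ty x = .bang}
      {x | (L.mergeGraph (f.fv b) (f.fv b')).ty x = .bang} := by
  have hbbI : I.ty b = I.ty b' := hb.trans hb'.symm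
  have hbL : L.ty (f.fv b) = .bang := by rw [f.map_ty]; exact hb
  have hbL' : L.ty (f.fv b') = .bang := by rw [f.map_ty]; exact hb'
  have hbbL : L.ty (f.fv b) = L.ty (f.fv b') := hbL.trans hbL'.symm
  refine ⟨fun x hx => ?_, fun x hx y hy hxy => ?_, fun y hy => ?_⟩
  · obtain ⟨v, rfl⟩ := Quot.exists_rep x
    have hv : I.ty v = .bang := by
      have h2 : (I.mergeGraph b b').ty (Quot.mk _ v) = .bang := hx
      rwa [ty_mk' hbbI] at h2
    show (L.mergeGraph (f.fv b) (f.fv b')).ty (Quot.mk _ (f.fv v)) = .bang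
    rw [ty_mk' hbbL]
    exact hbijV.mapsTo hv
  · obtain ⟨v, rfl⟩ := Quot.exists_rep x
    obtain ⟨w, rfl⟩ := Quot.exists_rep y
    have hv : I.ty v = .bang := by
      have h2 : (I.mergeGraph b b').ty (Quot.mk _ v) = .bang := hx
      rwa [ty_mk' hbbI] at h2
    have hw : I.ty w = .bang := by
      have h2 : (I.mergeGraph b b').ty (Quot.mk _ w) = .bang := hy
      rwa [ty_mk' hbbI] at h2
    have hrel := mergeVRel_mk_eq.1
      (hxy : Quot.mk _ (f.fv v) = Quot.mk _ (f.fv w))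
    show Quot.mk (mergeVRel b b') v = Quot.mk _ w
    rcases hrel with heq | ⟨h1, h2⟩ | ⟨h1, h2⟩
    · rw [hbijV.injOn hv hw heq]
    · rw [hinjb v h1, hinj' w h2]
      exact Quot.sound (Or.inr (Or.inl ⟨rfl, rfl⟩))
    · rw [hinj' v h1, hinjb w h2]
      exact Quot.sound (Or.inr (Or.inr ⟨rfl, rfl⟩))
  · obtain ⟨u, rfl⟩ := Quot.exists_rep y
    have hu : L.ty u = .bang := by
      have h2 : (L.mergeGraph (f.fv b) (f.fv b')).ty (Quot.mk _ u) = .bang := hy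
      rwa [ty_mk' hbbL] at h2
    obtain ⟨v, hv, hfv⟩ := hbijV.surjOn hu
    refine ⟨Quot.mk _ v, ?_, ?_⟩
    · show (I.mergeGraph b b').ty (Quot.mk _ v) = .bang
      rw [ty_mk' hbbI]; exact hv
    · show Quot.mk _ (f.fv v) = Quot.mk _ u
      rw [hfv]

theorem merge_beta_bijE (hpI : I.IsPattern) (hpL : L.IsPattern)
    (hb : I.ty b = .bang) (hb' : I.ty b' = .bang)
    (hLdisj : L.bsucc (f.fv b) ∩ L.bsucc (f.fv b') = ∅)
    (hinj' : ∀ v, f.fv v = f.fv b' → v = b')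
    (hinjb : ∀ v, f.fv v = f.fv b → v = b)
    (hbijV : Set.BijOn f.fv {v | I.ty v = .bang} {v | L.ty v = .bang})
    (hbijE : Set.BijOn f.fe I.betaEdges L.betaEdges) :
    Set.BijOn (mergeHom f b b' hinj').fe
      (I.mergeGraph b b').betaEdges
      (L.mergeGraph (f.fv b) (f.fv b')).betaEdges := by
  have hbbI : I.ty b = I.ty b' := hb.trans hb'.symm
  have hbL : L.ty (f.fv b) = .bang := by rw [f.map_ty]; exact hb
  have hbL' : L.ty (f.fv b') = .bang := by rw [f.map_ty]; exact hb'
  have hbbL : L.ty (f.fv b) = L.ty (f.fv b') := hbL.trans hbL'.symm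
  have hmemI : ∀ e : EI, Quot.mk (I.mergeERel b b') e ∈
      (I.mergeGraph b b').betaEdges → e ∈ I.betaEdges := by
    intro e he
    refine ⟨?_, ?_⟩
    · have := he.1; rwa [mergeGraph_s_mk, ty_mk' hbbI] at this
    · have := he.2; rwa [mergeGraph_t_mk, ty_mk' hbbI] at this
  -- reflecting quotient-equal endpoints from L to I
  have hvq : ∀ v w : VI, I.ty v = .bang → I.ty w = .bang →
      Quot.mk (mergeVRel (f.fv b) (f.fv b')) (f.fv v) = Quot.mk _ (f.fv w) →
      Quot.mk (mergeVRel b b') v = Quot.mk _ w := by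
    intro v w hv hw hq
    rcases mergeVRel_mk_eq.1 hq with heq | ⟨h1, h2⟩ | ⟨h1, h2⟩
    · rw [hbijV.injOn hv hw heq]
    · rw [hinjb v h1, hinj' w h2]
      exact Quot.sound (Or.inr (Or.inl ⟨rfl, rfl⟩))
    · rw [hinj' v h1, hinjb w h2]
      exact Quot.sound (Or.inr (Or.inr ⟨rfl, rfl⟩))
  refine ⟨fun x hx => ?_, fun x hx y hy hxy => ?_, fun y hy => ?_⟩
  · obtain ⟨e, rfl⟩ := Quot.exists_rep x
    have he := hmemI e hx
    refine ⟨?_, ?_⟩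
    · show (L.mergeGraph (f.fv b) (f.fv b')).ty
        ((L.mergeGraph (f.fv b) (f.fv b')).s (Quot.mk _ (f.fe e))) = .bang
      rw [mergeGraph_s_mk, ty_mk' hbbL, f.map_s, f.map_ty]
      exact he.1
    · show (L.mergeGraph (f.fv b) (f.fv b')).ty
        ((L.mergeGraph (f.fv b) (f.fv b')).t (Quot.mk _ (f.fe e))) = .bang
      rw [mergeGraph_t_mk, ty_mk' hbbL, f.map_t, f.map_ty]
      exact he.2
  · obtain ⟨e₁, rfl⟩ := Quot.exists_rep x
    obtain ⟨e₂, rfl⟩ := Quot.exists_rep y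
    have he₁ := hmemI e₁ hx
    have he₂ := hmemI e₂ hy
    have hq := mergeERel_mk_eq hpL hbL hbL' hLdisj |>.1
      (hxy : Quot.mk _ (f.fe e₁) = Quot.mk _ (f.fe e₂))
    show Quot.mk (I.mergeERel b b') e₁ = Quot.mk _ e₂
    rcases hq with heq | ⟨h1, h2, h3, h4⟩ | ⟨h1, h2, h3, h4⟩
    · rw [hbijE.injOn he₁ he₂ heq]
    · refine Quot.sound (Or.inr (Or.inl ⟨⟨?_, ?_⟩, ⟨?_, ?_⟩, ?_, ?_⟩))
      · exact bpred_reflect f hpL.1.2 hbijV hbijE hb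
          (by rw [← f.map_s]; exact h1.1)
      · exact bpred_reflect f hpL.1.2 hbijV hbijE hb
          (by rw [← f.map_t]; exact h1.2)
      · exact bpred_reflect f hpL.1.2 hbijV hbijE hb'
          (by rw [← f.map_s]; exact h2.1)
      · exact bpred_reflect f hpL.1.2 hbijV hbijE hb'
          (by rw [← f.map_t]; exact h2.2)
      · refine hvq _ _ he₁.1 he₂.1 ?_
        rw [← f.map_s, ← f.map_s]; exact h3
      · refine hvq _ _ he₁.2 he₂.2 ?_
        rw [← f.map_t, ← f.map_t]; exact h4
    · refine Quot.sound (Or.inr (Or.inr ⟨⟨?_, ?_⟩, ⟨?_, ?_⟩, ?_, ?_⟩))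
      · exact bpred_reflect f hpL.1.2 hbijV hbijE hb'
          (by rw [← f.map_s]; exact h1.1)
      · exact bpred_reflect f hpL.1.2 hbijV hbijE hb'
          (by rw [← f.map_t]; exact h1.2)
      · exact bpred_reflect f hpL.1.2 hbijV hbijE hb
          (by rw [← f.map_s]; exact h2.1)
      · exact bpred_reflect f hpL.1.2 hbijV hbijE hb
          (by rw [← f.map_t]; exact h2.2)
      · refine hvq _ _ he₁.1 he₂.1 ?_
        rw [← f.map_s, ← f.map_s]; exact h3
      · refine hvq _ _ he₁.2 he₂.2 ?_
        rw [← f.map_t, ← f.map_t]; exact h4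
  · obtain ⟨u, rfl⟩ := Quot.exists_rep y
    have hu : u ∈ L.betaEdges := by
      refine ⟨?_, ?_⟩
      · have := hy.1; rwa [mergeGraph_s_mk, ty_mk' hbbL] at this
      · have := hy.2; rwa [mergeGraph_t_mk, ty_mk' hbbL] at this
    obtain ⟨e, he, hfe⟩ := hbijE.surjOn hu
    refine ⟨Quot.mk _ e, ?_, ?_⟩
    · refine ⟨?_, ?_⟩
      · show (I.mergeGraph b b').ty
          ((I.mergeGraph b b').s (Quot.mk _ e)) = .bang
        rw [mergeGraph_s_mk, ty_mk' hbbI]; exact he.1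
      · show (I.mergeGraph b b').ty
          ((I.mergeGraph b b').t (Quot.mk _ e)) = .bang
        rw [mergeGraph_t_mk, ty_mk' hbbI]; exact he.2
    · show Quot.mk _ (f.fe e) = Quot.mk _ u
      rw [hfe]

theorem merge_box (hb : I.ty b = .bang) (hb' : I.ty b' = .bang)
    (hinj' : ∀ v, f.fv v = f.fv b' → v = b')
    (hinjb : ∀ v, f.fv v = f.fv b → v = b)
    (hbox : ∀ c, I.ty c = .bang → f.fv ⁻¹' (L.bsucc (f.fv c)) = I.bsucc c) :
    ∀ x, (I.mergeGraph b b').ty x = .bang →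
      (mergeHom f b b' hinj').fv ⁻¹'
          ((L.mergeGraph (f.fv b) (f.fv b')).bsucc ((mergeHom f b b' hinj').fv x)) =
        (I.mergeGraph b b').bsucc x := by
  have hbbI : I.ty b = I.ty b' := hb.trans hb'.symm
  intro x hx
  obtain ⟨c, rfl⟩ := Quot.exists_rep x
  have hc : I.ty c = .bang := by
    have h2 : (I.mergeGraph b b').ty (Quot.mk _ c) = .bang := hx
    rwa [ty_mk' hbbI] at h2
  ext y
  obtain ⟨v, rfl⟩ := Quot.exists_rep y
  constructor
  · intro hm
    obtain ⟨c₁, u₁, rc1, ru1, hmm⟩ := mem_bsucc_mergeGraph.1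
      (hm : Quot.mk _ (f.fv v) ∈
        (L.mergeGraph (f.fv b) (f.fv b')).bsucc (Quot.mk _ (f.fv c)))
    -- pull back c₁ to some c' with c₁ = f c'
    obtain ⟨c', hcrel, hceq⟩ :
        ∃ c', mergeVRel b b' c' c ∧ c₁ = f.fv c' := by
      rcases rc1 with heq | ⟨h1, h2⟩ | ⟨h1, h2⟩
      · exact ⟨c, Or.inl rfl, heq⟩
      · exact ⟨b, Or.inr (Or.inl ⟨rfl, hinj' c h2⟩), h1⟩
      · exact ⟨b', Or.inr (Or.inr ⟨rfl, hinjb c h2⟩), h1⟩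
    obtain ⟨v', hvrel, hveq⟩ :
        ∃ v', mergeVRel b b' v' v ∧ u₁ = f.fv v' := by
      rcases ru1 with heq | ⟨h1, h2⟩ | ⟨h1, h2⟩
      · exact ⟨v, Or.inl rfl, heq⟩
      · exact ⟨b, Or.inr (Or.inl ⟨rfl, hinj' v h2⟩), h1⟩
      · exact ⟨b', Or.inr (Or.inr ⟨rfl, hinjb v h2⟩), h1⟩
    have hc' : I.ty c' = .bang := bang_of_rel hb hb' hcrel hc
    rw [hceq, hveq] at hmm
    exact mem_bsucc_mergeGraph.2
      ⟨c', v', hcrel, hvrel, mem_of_preimage_eq f.fv (hbox c' hc') hmm⟩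
  · intro hm
    obtain ⟨c', v', rc, rv, hmem⟩ := mem_bsucc_mergeGraph.1 hm
    exact mem_bsucc_mergeGraph.2
      ⟨f.fv c', f.fv v', rel_map f rc, rel_map f rv, f.mem_bsucc hmem⟩

end MergeSpan

variable {VL EL VI EI VR ER : Type}
  {L : TGraph VL EL} {I : TGraph VI EI} {R : TGraph VR ER}
  {i₁ : GHom I L} {i₂ : GHom I R}

theorem merge_rewrite (h : IsRewritePattern L I R i₁ i₂) (b b' : VI)
    (hb : I.ty b = .bang) (hb' : I.ty b' = .bang)
    (hIpred : I.bpred b \ {b} = I.bpred b' \ {b'})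
    (hIdisj : I.bsucc b ∩ I.bsucc b' = ∅)
    (hLpred : L.bpred (i₁.fv b) \ {i₁.fv b} = L.bpred (i₁.fv b') \ {i₁.fv b'})
    (hLdisj : L.bsucc (i₁.fv b) ∩ L.bsucc (i₁.fv b') = ∅)
    (hRpred : R.bpred (i₂.fv b) \ {i₂.fv b} = R.bpred (i₂.fv b') \ {i₂.fv b'})
    (hRdisj : R.bsucc (i₂.fv b) ∩ R.bsucc (i₂.fv b') = ∅) :
    IsRewritePattern (L.mergeGraph (i₁.fv b) (i₁.fv b'))
      (I.mergeGraph b b') (R.mergeGraph (i₂.fv b) (i₂.fv b'))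
      (mergeHom i₁ b b' (h.inj₁ hb')) (mergeHom i₂ b b' (h.inj₂ hb')) := by
  have hbbI : I.ty b = I.ty b' := hb.trans hb'.symm
  have hbL : L.ty (i₁.fv b) = .bang := by rw [i₁.map_ty]; exact hb
  have hbL' : L.ty (i₁.fv b') = .bang := by rw [i₁.map_ty]; exact hb'
  have hbR : R.ty (i₂.fv b) = .bang := by rw [i₂.map_ty]; exact hb
  have hbR' : R.ty (i₂.fv b') = .bang := by rw [i₂.map_ty]; exact hb'
  refine ⟨merge_isPattern h.patL hbL hbL' hLpred hLdisj,
    merge_isPattern h.patI hb hb' hIpred hIdisj,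
    merge_isPattern h.patR hbR hbR' hRpred hRdisj,
    fun x => ?_, fun ε hε => ?_,
    merge_bound_bij i₁ hb hb' (h.inj₁ hb') h.bound_bij₁,
    merge_bound_bij i₂ hb hb' (h.inj₂ hb') h.bound_bij₂,
    fun x hx => ?_,
    merge_beta_bijV i₁ hb hb' (h.inj₁ hb') (h.inj₁ hb) h.beta_bijV₁,
    merge_beta_bijE i₁ h.patI h.patL hb hb' hLdisj (h.inj₁ hb') (h.inj₁ hb)
      h.beta_bijV₁ h.beta_bijE₁,
    merge_beta_bijV i₂ hb hb' (h.inj₂ hb') (h.inj₂ hb) h.beta_bijV₂,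
    merge_beta_bijE i₂ h.patI h.patR hb hb' hRdisj (h.inj₂ hb') (h.inj₂ hb)
      h.beta_bijV₂ h.beta_bijE₂,
    merge_box i₁ hb hb' (h.inj₁ hb') (h.inj₁ hb) h.box₁,
    merge_box i₂ hb hb' (h.inj₂ hb') (h.inj₂ hb) h.box₂⟩
  · obtain ⟨v, rfl⟩ := Quot.exists_rep x
    rw [ty_mk' hbbI]
    exact h.no_node v
  · obtain ⟨e, rfl⟩ := Quot.exists_rep ε
    refine h.no_sigma_edges e ⟨?_, ?_⟩
    · have := hε.1; rwa [mergeGraph_s_mk, ty_mk' hbbI] at this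
    · have := hε.2; rwa [mergeGraph_t_mk, ty_mk' hbbI] at this
  · obtain ⟨v, rfl⟩ := Quot.exists_rep x
    have hv : I.ty v = .wire := by
      have h2 : (I.mergeGraph b b').ty (Quot.mk _ v) = .wire := hx
      rwa [ty_mk' hbbI] at h2
    have hio := h.inout v hv
    exact ⟨⟨fun hin => (merge_isInput_iff hbR hbR').2
        (hio.1.1 ((merge_isInput_iff hbL hbL').1 hin)),
      fun hin => (merge_isInput_iff hbL hbL').2
        (hio.1.2 ((merge_isInput_iff hbR hbR').1 hin))⟩,
      ⟨fun hout => (merge_isOutput_iff hbR hbR').2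
        (hio.2.1 ((merge_isOutput_iff hbL hbL').1 hout)),
      fun hout => (merge_isOutput_iff hbL hbL').2
        (hio.2.2 ((merge_isOutput_iff hbR hbR').1 hout))⟩⟩

end TGraph
open TGraph in
/-- Applying any of the rewrite `!`-box operations `PCOPY_b`,
`PDROP_b`, `PKILL_b` (for a `!`-vertex `b` of `I`) or `PMERGE_{b,b'}` (for
mergable `!`-vertices, with mergable images) to a rewrite pattern yields
another rewrite pattern. -/
theorem statement_17 {VL EL VI EI VR ER : Type}
    {L : TGraph VL EL} {I : TGraph VI EI} {R : TGraph VR ER}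
    {i₁ : GHom I L} {i₂ : GHom I R}
    (h : IsRewritePattern L I R i₁ i₂) :
    (∀ b, ∀ hb : I.ty b = .bang,
      IsRewritePattern (L.copyGraph (i₁.fv b)) (I.copyGraph b)
        (R.copyGraph (i₂.fv b))
        (copyHom i₁ b (h.box₁ b hb)) (copyHom i₂ b (h.box₂ b hb))) ∧
    (∀ b, ∀ hb : I.ty b = .bang,
      IsRewritePattern (L.dropGraph (i₁.fv b)) (I.dropGraph b)
        (R.dropGraph (i₂.fv b))
        (dropHom i₁ b (h.ne₁ hb)) (dropHom i₂ b (h.ne₂ hb))) ∧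
    (∀ b, ∀ hb : I.ty b = .bang,
      IsRewritePattern (L.killGraph (i₁.fv b)) (I.killGraph b)
        (R.killGraph (i₂.fv b))
        (killHom i₁ b (h.box₁ b hb)) (killHom i₂ b (h.box₂ b hb))) ∧
    (∀ b b', ∀ _ : I.ty b = .bang, ∀ hb' : I.ty b' = .bang,
      I.bpred b \ {b} = I.bpred b' \ {b'} →
      I.bsucc b ∩ I.bsucc b' = ∅ →
      L.bpred (i₁.fv b) \ {i₁.fv b} = L.bpred (i₁.fv b') \ {i₁.fv b'} →
      L.bsucc (i₁.fv b) ∩ L.bsucc (i₁.fv b') = ∅ →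
      R.bpred (i₂.fv b) \ {i₂.fv b} = R.bpred (i₂.fv b') \ {i₂.fv b'} →
      R.bsucc (i₂.fv b) ∩ R.bsucc (i₂.fv b') = ∅ →
      IsRewritePattern (L.mergeGraph (i₁.fv b) (i₁.fv b'))
        (I.mergeGraph b b') (R.mergeGraph (i₂.fv b) (i₂.fv b'))
        (mergeHom i₁ b b' (h.inj₁ hb')) (mergeHom i₂ b b' (h.inj₂ hb'))) := by
  exact ⟨fun b hb => copy_rewrite h b hb,
    fun b hb => drop_rewrite h b hb,
    fun b hb => kill_rewrite h b hb,
    fun b b' hb hb' hIp hId hLp hLd hRp hRd =>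
      merge_rewrite h b b' hb hb' hIp hId hLp hLd hRp hRd⟩
end

section
/- The embedding E of the category of string graphs into the category of pattern graphs, regarding each string graph as a pattern graph with no !-vertices, is full and coreflective: it is left adjoint to the forgetful functor U sending a pattern graph to the string graph obtained by deleting all !-vertices and all edges incident to them. -/
open CategoryTheory

/-- Every string graph is a pattern graph (with no `!`-vertices). -/
theorem TGraph.isPattern_of_isStringGraph {V E : Type} {G : TGraph V E}
    (h : G.IsStringGraph) : G.IsPattern := by
  obtain ⟨⟨hnn, hnb⟩, hw⟩ := h
  refine ⟨⟨hnn, fun e he => absurd he (hnb _)⟩,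
    ⟨hnn, fun v hv => ⟨fun e₁ e₂ _ _ h1 h2 => (hw v hv).1 e₁ e₂ h1 h2,
      fun e₁ e₂ _ _ h1 h2 => (hw v hv).2 e₁ e₂ h1 h2⟩⟩,
    ⟨fun e₁ e₂ h1 _ _ _ => absurd h1.1 (hnb _),
      fun b hb => absurd hb (hnb b),
      fun b b' hb _ _ _ => absurd hb (hnb b),
      fun a b c ha _ _ _ _ => absurd ha (hnb a)⟩,
    fun b hb => absurd hb (hnb b),
    fun b b' hb _ _ => absurd hb (hnb b)⟩

/-- Deleting the `!`-vertices of a pattern graph yields a string graph. -/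
theorem TGraph.isStringGraph_restrictNonBang {V E : Type} {G : TGraph V E}
    (h : G.IsPattern) : (G.restrict {v | G.ty v ≠ .bang}).IsStringGraph := by
  obtain ⟨⟨hnn, _⟩, ⟨_, hsig⟩, _, _, _⟩ := h
  refine ⟨⟨fun e he => hnn e.1 he, fun v => v.2⟩, fun v hv => ⟨?_, ?_⟩⟩
  · intro e₁ e₂ h1 h2
    exact Subtype.ext ((hsig v.1 hv).1 e₁.1 e₂.1 ⟨e₁.2.1, e₁.2.2⟩ ⟨e₂.2.1, e₂.2.2⟩
      (congrArg Subtype.val h1) (congrArg Subtype.val h2))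
  · intro e₁ e₂ h1 h2
    exact Subtype.ext ((hsig v.1 hv).2 e₁.1 e₂.1 ⟨e₁.2.1, e₁.2.2⟩ ⟨e₂.2.1, e₂.2.2⟩
      (congrArg Subtype.val h1) (congrArg Subtype.val h2))

/-- The category `SGraph` of string graphs. -/
structure SGCat : Type 1 where
  V : Type
  E : Type
  G : TGraph V E
  str : G.IsStringGraph

/-- The category `SPatGraph` of pattern graphs. -/
structure PGCat : Type 1 where
  V : Type
  E : Type
  G : TGraph V E
  pat : G.IsPattern

instance : Category SGCat where
  Hom A B := TGraph.GHom A.G B.G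
  id A := TGraph.GHom.id A.G
  comp f g := g.comp f
  id_comp _ := rfl
  comp_id _ := rfl
  assoc _ _ _ := rfl

instance : Category PGCat where
  Hom A B := TGraph.GHom A.G B.G
  id A := TGraph.GHom.id A.G
  comp f g := g.comp f
  id_comp _ := rfl
  comp_id _ := rfl
  assoc _ _ _ := rfl

/-- The morphism of string graphs obtained by restricting a pattern-graph
morphism to the non-`!`-vertices. -/
def restrictBangHom {V E V' E' : Type} {G : TGraph V E} {H : TGraph V' E'}
    (f : TGraph.GHom G H) :
    TGraph.GHom (G.restrict {v | G.ty v ≠ .bang}) (H.restrict {v | H.ty v ≠ .bang}) where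
  fv v := ⟨f.fv v.1, show H.ty (f.fv v.1) ≠ .bang from by rw [f.map_ty]; exact v.2⟩
  fe e := ⟨f.fe e.1,
    ⟨show H.ty (H.s (f.fe e.1)) ≠ .bang from by rw [f.map_s, f.map_ty]; exact e.2.1,
     show H.ty (H.t (f.fe e.1)) ≠ .bang from by rw [f.map_t, f.map_ty]; exact e.2.2⟩⟩
  map_s e := Subtype.ext (f.map_s e.1)
  map_t e := Subtype.ext (f.map_t e.1)
  map_ty v := f.map_ty v.1

/-- The embedding `E : SGraph ↪ SPatGraph`, regarding a string graph as a
pattern graph with no `!`-vertices. -/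
def EFunc : SGCat ⥤ PGCat where
  obj A := ⟨A.V, A.E, A.G, TGraph.isPattern_of_isStringGraph A.str⟩
  map f := f
  map_id _ := rfl
  map_comp _ _ := rfl

/-- The forgetful functor `U : SPatGraph → SGraph` deleting all `!`-vertices
and the edges incident to them. -/
def UFunc : PGCat ⥤ SGCat where
  obj A := ⟨_, _, A.G.restrict {v | A.G.ty v ≠ .bang},
    TGraph.isStringGraph_restrictNonBang A.pat⟩
  map f := restrictBangHom f
  map_id _ := rfl
  map_comp _ _ := rfl

/-! A string graph has no `!`-vertices, so every morphism from it into a pattern graph `P`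
lands in the non-`!` part of `P`. Corestricting along the inclusion `U P ↪ P` (the counit)
is therefore a bijection `Hom(E A, P) ≃ Hom(A, U P)`, natural in `A` and `P`. Fullness is
immediate because `E` acts as the identity on morphisms. -/

namespace TGraph

variable {V E V' E' : Type} {G : TGraph V E} {H : TGraph V' E'}

def restrictIncl (G : TGraph V E) (S : Set V) : GHom (G.restrict S) G where
  fv v := v.1
  fe e := e.1
  map_s _ := rfl
  map_t _ := rfl
  map_ty _ := rfl

def GHom.codRestrict (f : GHom G H) (S : Set V') (hS : ∀ v, f.fv v ∈ S) :
    GHom G (H.restrict S) where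
  fv v := ⟨f.fv v, hS v⟩
  fe e := ⟨f.fe e, by rw [f.map_s]; exact hS _, by rw [f.map_t]; exact hS _⟩
  map_s e := Subtype.ext (f.map_s e)
  map_t e := Subtype.ext (f.map_t e)
  map_ty v := f.map_ty v

theorem GHom.ty_fv_ne_bang (f : GHom G H) (hG : ∀ v, G.ty v ≠ .bang) (v : V) :
    H.ty (f.fv v) ≠ .bang := by
  rw [f.map_ty]
  exact hG v

end TGraph

def eFuncUFuncHomEquiv (A : SGCat) (P : PGCat) : (EFunc.obj A ⟶ P) ≃ (A ⟶ UFunc.obj P) where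
  toFun f := TGraph.GHom.codRestrict f _ (f.ty_fv_ne_bang A.str.1.2)
  invFun g := (P.G.restrictIncl _).comp g
  left_inv _ := rfl
  right_inv _ := rfl

/-- The embedding `E : SGraph → SPatGraph`, regarding each
string graph as a pattern graph with no `!`-vertices, is full and
coreflective: it is left adjoint to the forgetful functor `U` deleting all
`!`-vertices and their incident edges. -/
theorem statement_19 : EFunc.Full ∧ Nonempty (EFunc ⊣ UFunc) :=
  ⟨⟨fun f => ⟨f, rfl⟩⟩, ⟨Adjunction.mkOfHomEquiv
    { homEquiv := eFuncUFuncHomEquiv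
      homEquiv_naturality_left_symm := fun _ _ => rfl
      homEquiv_naturality_right := fun _ _ => rfl }⟩⟩
end
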